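/- arXiv:2508.17804 — 12 statements merged into one kernel-verified Lean document; each statement's English description precedes it below -/
import Mathlib

section
/- The spectral radius of R is strictly less than 1. -/
/-!
Suppose `R v = μ v` with `v ≠ 0` and `‖μ‖ ≥ 1`. The moduli `w i = ‖v i‖` then satisfy
`w ≤ R w`, and since every row of `R` sums to at most `1`, the maximum principle for
substochastic matrices shows that the set where `w` attains its (positive) maximum is closed
under the edges `R i j > 0`. Following a positive path from a maximiser to a sink therefore
puts a maximiser in `S`, whose row vanishes, so the maximum would be `≤ 0`.
-/

open Matrix Finset

theorem Matrix.exists_mulVec_eq_smul_of_mem_spectrum {n K : Type*} [Fintype n] [DecidableEq n]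
    [Field K] {A : Matrix n n K} {μ : K} (hμ : μ ∈ spectrum K A) :
    ∃ v : n → K, v ≠ 0 ∧ A *ᵥ v = μ • v := by
  rw [← spectrum_toLin', ← Module.End.hasEigenvalue_iff_mem_spectrum] at hμ
  obtain ⟨v, hv⟩ := hμ.exists_hasEigenvector
  exact ⟨v, hv.2, by simpa using hv.apply_eq_smul⟩

theorem Fin.apply_last_of_chain {α : Type*} {r : α → α → Prop} {P : α → Prop}
    (hP : ∀ a b, P a → r a b → P b) {l : ℕ} {p : Fin (l + 1) → α}
    (hp : ∀ h : Fin l, r (p h.castSucc) (p h.succ)) (h0 : P (p 0)) : P (p (Fin.last l)) :=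
  Fin.induction h0 (fun h ih => hP _ _ ih (hp h)) (Fin.last l)

section NonnegMatrix

variable {E : Type*} [Fintype E] {R : Matrix E E ℝ}

theorem norm_mul_norm_le_sum_mul_norm (hR : ∀ i j, 0 ≤ R i j) {μ : ℂ} {v : E → ℂ}
    (hv : R.map (Complex.ofReal ·) *ᵥ v = μ • v) (i : E) :
    ‖μ‖ * ‖v i‖ ≤ ∑ j, R i j * ‖v j‖ :=
  calc ‖μ‖ * ‖v i‖ = ‖∑ j, (R i j : ℂ) * v j‖ := by
        rw [← norm_mul, ← smul_eq_mul, ← Pi.smul_apply, ← hv]; rfl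
    _ ≤ ∑ j, ‖(R i j : ℂ) * v j‖ := norm_sum_le _ _
    _ = ∑ j, R i j * ‖v j‖ := by
        simp only [norm_mul, Complex.norm_real, Real.norm_of_nonneg (hR i _)]

variable {w : E → ℝ} {M : ℝ} {i : E}

theorem le_rowSum_mul_of_le_sum_mul (hR : ∀ j, 0 ≤ R i j) (hw : ∀ j, w j ≤ M)
    (hi : M ≤ ∑ j, R i j * w j) : M ≤ (∑ j, R i j) * M := by
  rw [sum_mul]
  exact hi.trans (sum_le_sum fun j _ => mul_le_mul_of_nonneg_left (hw j) (hR j))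

theorem eq_of_pos_of_le_sum_mul (hR : ∀ j, 0 ≤ R i j) (hrow : ∑ j, R i j ≤ 1) (hM : 0 ≤ M)
    (hw : ∀ j, w j ≤ M) (hi : M ≤ ∑ j, R i j * w j) {j : E} (hij : 0 < R i j) :
    w j = M := by
  by_contra hne
  have hlt : ∑ k, R i k * w k < (∑ k, R i k) * M := by
    rw [sum_mul]
    exact sum_lt_sum (fun k _ => mul_le_mul_of_nonneg_left (hw k) (hR k))
      ⟨j, mem_univ j, mul_lt_mul_of_pos_left (lt_of_le_of_ne (hw j) hne) hij⟩
  nlinarith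

end NonnegMatrix

theorem spectral_radius_lt_one_general
    {E : Type*} [Fintype E] [DecidableEq E]
    (S : Finset E)
    (R : Matrix E E ℝ)
    (hRnn : ∀ i j, 0 ≤ R i j)
    (hrow1 : ∀ i, i ∉ S → ∑ j, R i j = 1)
    (hrow0 : ∀ i, i ∈ S → ∑ j, R i j = 0)
    (hout : ∀ i₀ : E, ∃ (l : ℕ) (p : Fin (l + 1) → E), p 0 = i₀ ∧
      p (Fin.last l) ∈ S ∧ 0 < ∏ h : Fin l, R (p h.castSucc) (p h.succ)) :
    ∀ μ ∈ spectrum ℂ (R.map (Complex.ofReal ·)), ‖μ‖ < 1 := by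
  intro μ hμ
  by_contra! hμ1
  obtain ⟨v, hv0, hv⟩ := exists_mulVec_eq_smul_of_mem_spectrum hμ
  obtain ⟨k, hk⟩ := Function.ne_iff.mp hv0
  set w : E → ℝ := fun i => ‖v i‖
  have hsub (i : E) : w i ≤ ∑ j, R i j * w j :=
    (le_mul_of_one_le_left (norm_nonneg _) hμ1).trans (norm_mul_norm_le_sum_mul_norm hRnn hv i)
  have hrow (i : E) : ∑ j, R i j ≤ 1 := by
    by_cases hi : i ∈ S
    · simp [hrow0 i hi]
    · exact (hrow1 i hi).le
  obtain ⟨i₀, -, hmax⟩ := exists_max_image univ w ⟨k, mem_univ k⟩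
  have hmax' (j : E) : w j ≤ w i₀ := hmax j (mem_univ j)
  have hpos : 0 < w i₀ := (norm_pos_iff.mpr hk).trans_le (hmax' k)
  obtain ⟨l, p, hp0, hpS, hprod⟩ := hout i₀
  have hedge (h : Fin l) : 0 < R (p h.castSucc) (p h.succ) :=
    (hRnn _ _).lt_of_ne' (prod_ne_zero_iff.mp hprod.ne' h (mem_univ h))
  have hlast : w (p (Fin.last l)) = w i₀ :=
    Fin.apply_last_of_chain (P := fun i => w i = w i₀)
      (fun i j hi hij => eq_of_pos_of_le_sum_mul (hRnn i) (hrow i) hpos.le hmax' (hi ▸ hsub i) hij)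
      hedge (by rw [hp0])
  have hsink := le_rowSum_mul_of_le_sum_mul (hRnn _) hmax' (hlast ▸ hsub _)
  rw [hrow0 _ hpS, zero_mul] at hsink
  linarith

/-- Under the nonnegativity, row-sum and out-connectedness assumptions,
the spectral radius of the routing matrix `R` is strictly less than `1`, i.e., every
(complex) eigenvalue of `R` has absolute value strictly less than `1`. -/
theorem spectral_radius_lt_one
    {E : Type*} [Fintype E] [DecidableEq E] [Nonempty E]
    (S : Finset E) (hS : S.Nonempty)
    (R : Matrix E E ℝ)
    (hRnn : ∀ i j, 0 ≤ R i j)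
    (hrow1 : ∀ i, i ∉ S → ∑ j, R i j = 1)
    (hrow0 : ∀ i, i ∈ S → ∑ j, R i j = 0)
    (hout : ∀ i₀ : E, ∃ (l : ℕ) (p : Fin (l + 1) → E), p 0 = i₀ ∧
      p (Fin.last l) ∈ S ∧ 0 < ∏ h : Fin l, R (p h.castSucc) (p h.succ)) :
    ∀ μ ∈ spectrum ℂ (R.map (Complex.ofReal ·)), ‖μ‖ < 1 :=
  spectral_radius_lt_one_general S R hRnn hrow1 hrow0 hout
end

section
/- The matrix I − R is invertible, its inverse equals the convergent Neumann series Σ_{n≥0} Rⁿ, and all entries of (I − R)⁻¹ are nonnegative. -/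
/-!
`R` is substochastic, so the row sums `Rⁿ *ᵥ 1` decrease with `n` and stay `≤ 1`. Following an
out-path from a state `i` to a sink, on which the row sum of `R` vanishes, the row sum of the next power at
`i` drops strictly below `1`; taking the largest of these finitely many exponents gives a power
`R ^ M` all of whose row sums are `< 1`, i.e. `‖R ^ M‖ < 1` in the `L∞` operator norm. Hence the
Neumann series converges, it inverts `1 - R` by telescoping, and its entries are nonnegative.
-/

open Matrix

theorem summable_pow_of_norm_pow_lt_one {A : Type*} [NormedRing A] [HasSummableGeomSeries A]
    {x : A} {M : ℕ} (hM : M ≠ 0) (hx : ‖x ^ M‖ < 1) : Summable (x ^ ·) := by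
  have : NeZero M := ⟨hM⟩
  -- split `ℕ` into residue classes `M * k + r`, on each of which the series is geometric
  rw [Finset.sum_indicator_mod M (x ^ ·), Finset.sum_fn]
  refine summable_sum fun r _ => ?_
  rw [← ZMod.natCast_zmod_val r, summable_indicator_mod_iff_summable]
  simp_rw [pow_add, pow_mul]
  exact (summable_geometric_of_norm_lt_one hx).mul_right _

namespace Matrix

theorem tsum_apply {ι m n α : Type*} [AddCommMonoid α] [TopologicalSpace α] [T2Space α]
    {f : ι → Matrix m n α} (hf : Summable f) (i : m) (j : n) :
    (∑' k, f k) i j = ∑' k, f k i j := by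
  -- `rw` does not unfold the type synonym `Matrix m n α := m → n → α`
  erw [_root_.tsum_apply hf, _root_.tsum_apply (Pi.summable.1 hf i)]

variable {E : Type*} [Fintype E] {A : Matrix E E ℝ}

theorem mulVec_mono_of_nonneg (hA : ∀ i j, 0 ≤ A i j) {v w : E → ℝ} (hvw : v ≤ w) :
    A *ᵥ v ≤ A *ᵥ w := fun i =>
  Finset.sum_le_sum fun j _ => mul_le_mul_of_nonneg_left (hvw j) (hA i j)

section

attribute [local instance] Matrix.linftyOpNormedAddCommGroup

theorem linfty_opNorm_lt_one_of_mulVec_one_lt_one (hA : ∀ i j, 0 ≤ A i j)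
    (h : ∀ i, (A *ᵥ 1) i < 1) : ‖A‖ < 1 := by
  rw [← coe_nnnorm, NNReal.coe_lt_one, linfty_opNNNorm_def, Finset.sup_lt_iff zero_lt_one]
  intro i _
  rw [← NNReal.coe_lt_one, NNReal.coe_sum]
  simpa [mulVec, dotProduct, Real.norm_of_nonneg (hA i _)] using h i

end

variable [DecidableEq E]

section

attribute [local instance] Matrix.linftyOpNormedRing Matrix.linftyOpNormedAlgebra

theorem summable_pow_of_pow_mulVec_one_lt_one (hA : ∀ i j, 0 ≤ A i j) {M : ℕ} (hM : M ≠ 0)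
    (h : ∀ i, (A ^ M *ᵥ 1) i < 1) : Summable (A ^ ·) :=
  summable_pow_of_norm_pow_lt_one hM
    (linfty_opNorm_lt_one_of_mulVec_one_lt_one (pow_apply_nonneg hA M) h)

end

theorem antitone_pow_mulVec_one (hA : ∀ i j, 0 ≤ A i j) (hsub : A *ᵥ 1 ≤ 1) :
    Antitone fun n => A ^ n *ᵥ 1 :=
  antitone_nat_of_succ_le fun n => by
    rw [pow_succ, ← mulVec_mulVec]
    exact mulVec_mono_of_nonneg (pow_apply_nonneg hA n) hsub

theorem pow_mulVec_one_le_one (hA : ∀ i j, 0 ≤ A i j) (hsub : A *ᵥ 1 ≤ 1) (n : ℕ) :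
    A ^ n *ᵥ 1 ≤ 1 := by
  simpa using antitone_pow_mulVec_one hA hsub (Nat.zero_le n)

theorem prod_le_pow_apply (hA : ∀ i j, 0 ≤ A i j) {l : ℕ} (p : Fin (l + 1) → E) :
    ∏ h : Fin l, A (p h.castSucc) (p h.succ) ≤ (A ^ l) (p 0) (p (Fin.last l)) := by
  induction l with
  | zero => simp
  | succ l ih =>
    have htail := ih (fun h => p h.succ)
    simp only [Fin.succ_last] at htail
    rw [Fin.prod_univ_succ, pow_succ', mul_apply]
    calc A (p 0) (p 1) * ∏ h : Fin l, A (p h.succ.castSucc) (p h.succ.succ)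
        ≤ A (p 0) (p 1) * (A ^ l) (p 1) (p (Fin.last (l + 1))) :=
          mul_le_mul_of_nonneg_left htail (hA _ _)
      _ ≤ ∑ k, A (p 0) k * (A ^ l) k (p (Fin.last (l + 1))) :=
          Finset.single_le_sum (f := fun k => A (p 0) k * (A ^ l) k (p (Fin.last (l + 1))))
            (fun k _ => mul_nonneg (hA _ _) (pow_apply_nonneg hA l _ _)) (Finset.mem_univ _)

theorem pow_succ_mulVec_one_lt_one (hA : ∀ i j, 0 ≤ A i j) (hsub : A *ᵥ 1 ≤ 1) {s : E}
    (hs : (A *ᵥ 1) s = 0) {n : ℕ} {i : E} (hpos : 0 < (A ^ n) i s) :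
    (A ^ (n + 1) *ᵥ 1) i < 1 := by
  have hsub_s : A *ᵥ 1 ≤ 1 - Pi.single s 1 := by
    intro k
    by_cases hk : k = s
    · subst hk; simp [hs]
    · simpa [hk] using hsub k
  calc (A ^ (n + 1) *ᵥ 1) i = (A ^ n *ᵥ (A *ᵥ 1)) i := by rw [pow_succ, mulVec_mulVec]
    _ ≤ (A ^ n *ᵥ (1 - Pi.single s 1)) i :=
        mulVec_mono_of_nonneg (pow_apply_nonneg hA n) hsub_s i
    _ = (A ^ n *ᵥ 1) i - (A ^ n) i s := by simp [mulVec_sub]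
    _ ≤ 1 - (A ^ n) i s := by gcongr; exact pow_mulVec_one_le_one hA hsub n i
    _ < 1 := sub_lt_self 1 hpos

theorem exists_pow_mulVec_one_lt_one (hA : ∀ i j, 0 ≤ A i j) (hsub : A *ᵥ 1 ≤ 1)
    (h : ∀ i, ∃ n, (A ^ n *ᵥ 1) i < 1) : ∃ M ≠ 0, ∀ i, (A ^ M *ᵥ 1) i < 1 := by
  choose n hn using h
  refine ⟨Finset.univ.sup n + 1, Nat.succ_ne_zero _, fun i => ?_⟩
  have hle : n i ≤ Finset.univ.sup n + 1 := (Finset.le_sup (Finset.mem_univ i)).trans le_self_add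
  exact (antitone_pow_mulVec_one hA hsub hle i).trans_lt (hn i)

end Matrix

theorem neumann_series_inverse_general
    {E : Type*} [Fintype E] [DecidableEq E]
    (S : Finset E)
    (R : Matrix E E ℝ)
    (hRnn : ∀ i j, 0 ≤ R i j)
    (hrow1 : ∀ i, i ∉ S → ∑ j, R i j = 1)
    (hrow0 : ∀ i, i ∈ S → ∑ j, R i j = 0)
    (hout : ∀ i₀ : E, ∃ (l : ℕ) (p : Fin (l + 1) → E), p 0 = i₀ ∧
      p (Fin.last l) ∈ S ∧ 0 < ∏ h : Fin l, R (p h.castSucc) (p h.succ)) :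
    IsUnit (1 - R) ∧ Summable (fun n : ℕ => R ^ n) ∧
      (1 - R)⁻¹ = ∑' n : ℕ, R ^ n ∧ ∀ i j, 0 ≤ (1 - R)⁻¹ i j := by
  have hrowSum : ∀ i, (R *ᵥ 1) i = ∑ j, R i j := fun i => by simp [mulVec, dotProduct]
  have hsub : R *ᵥ 1 ≤ 1 := fun i => by
    by_cases hi : i ∈ S <;> simp [hrowSum, hi, hrow0, hrow1]
  have hleak : ∀ i, ∃ n, (R ^ n *ᵥ 1) i < 1 := fun i => by
    obtain ⟨l, p, rfl, hsink, hpos⟩ := hout i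
    exact ⟨l + 1, pow_succ_mulVec_one_lt_one hRnn hsub ((hrowSum _).trans (hrow0 _ hsink))
      (hpos.trans_le (prod_le_pow_apply hRnn p))⟩
  obtain ⟨M, hM, hlt⟩ := exists_pow_mulVec_one_lt_one hRnn hsub hleak
  have hsum := summable_pow_of_pow_mulVec_one_lt_one hRnn hM hlt
  have hinv : (1 - R)⁻¹ = ∑' n : ℕ, R ^ n := inv_eq_right_inv hsum.one_sub_mul_tsum_pow
  refine ⟨isUnit_iff_exists.2 ⟨_, hsum.one_sub_mul_tsum_pow, hsum.tsum_pow_mul_one_sub⟩,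
    hsum, hinv, fun i j => ?_⟩
  rw [hinv, Matrix.tsum_apply hsum]
  exact tsum_nonneg fun n => pow_apply_nonneg hRnn n i j

/-- Under the nonnegativity, row-sum and out-connectedness assumptions,
the matrix `I - R` is invertible, its inverse is given by the convergent Neumann series
`∑ n, R ^ n`, and all the entries of `(I - R)⁻¹` are nonnegative. -/
theorem neumann_series_inverse
    {E : Type*} [Fintype E] [DecidableEq E] [Nonempty E]
    (S : Finset E) (hS : S.Nonempty)
    (R : Matrix E E ℝ)
    (hRnn : ∀ i j, 0 ≤ R i j)
    (hrow1 : ∀ i, i ∉ S → ∑ j, R i j = 1)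
    (hrow0 : ∀ i, i ∈ S → ∑ j, R i j = 0)
    (hout : ∀ i₀ : E, ∃ (l : ℕ) (p : Fin (l + 1) → E), p 0 = i₀ ∧
      p (Fin.last l) ∈ S ∧ 0 < ∏ h : Fin l, R (p h.castSucc) (p h.succ)) :
    IsUnit (1 - R) ∧ Summable (fun n : ℕ => R ^ n) ∧
      (1 - R)⁻¹ = ∑' n : ℕ, R ^ n ∧ ∀ i j, 0 ≤ (1 - R)⁻¹ i j :=
  neumann_series_inverse_general S R hRnn hrow1 hrow0 hout
end

section
/- Every eigenvalue of the matrix A = −(I − Rᵀ)D has strictly negative real part, i.e., A is Hurwitz stable. -/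
/-!
Write `D = diagonal d`. If `v ᵥ* A = μ • v` with `v ≠ 0` and `0 ≤ Re μ`, then entrywise
`(μ + dᵢ) vᵢ = dᵢ (R v)ᵢ`, and `dᵢ ≤ ‖μ + dᵢ‖` turns this into `‖vᵢ‖ ≤ (R ‖v‖)ᵢ`: the function
`‖v‖` is subharmonic for `R`. At a maximum of a subharmonic function with positive value the row
of `R` cannot vanish, so the row is stochastic and the maximum propagates to every successor.
Following a path to a sink gives a contradiction, hence `‖v‖ ≤ 0`.
-/

open Matrix

theorem eq_of_le_sum_mul {ι : Type*} [Fintype ι] {w f : ι → ℝ} {m : ℝ} (hw : ∀ j, 0 ≤ w j)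
    (hw1 : ∑ j, w j = 1) (hf : ∀ j, f j ≤ m) (hm : m ≤ ∑ j, w j * f j) {j : ι} (hj : w j ≠ 0) :
    f j = m := by
  have hgap : ∑ k, w k * (m - f k) = 0 := by
    refine le_antisymm ?_ (Finset.sum_nonneg fun k _ => mul_nonneg (hw k) (sub_nonneg.2 (hf k)))
    simp only [mul_sub, Finset.sum_sub_distrib, ← Finset.sum_mul, hw1, one_mul]
    linarith
  have := (Finset.sum_eq_zero_iff_of_nonneg fun k _ =>
    mul_nonneg (hw k) (sub_nonneg.2 (hf k))).1 hgap j (Finset.mem_univ j)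
  linarith [(mul_eq_zero.1 this).resolve_left hj]

section Substochastic

variable {E : Type*} [Fintype E] {S : Finset E} {R : Matrix E E ℝ}

theorem notMem_and_eq_of_le_mulVec (hRnn : ∀ i j, 0 ≤ R i j)
    (hrow1 : ∀ i, i ∉ S → ∑ j, R i j = 1) (hrow0 : ∀ i, i ∈ S → ∑ j, R i j = 0)
    {f : E → ℝ} {i : E} (hmax : ∀ j, f j ≤ f i) (hpos : 0 < f i) (hsub : f i ≤ (R *ᵥ f) i) :
    i ∉ S ∧ ∀ j, R i j ≠ 0 → f j = f i := by
  have hiS : i ∉ S := by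
    intro hiS
    have hrow : ∀ j, R i j = 0 := fun j =>
      (Finset.sum_eq_zero_iff_of_nonneg fun j _ => hRnn i j).1 (hrow0 i hiS) j (Finset.mem_univ j)
    have hRf : (R *ᵥ f) i = 0 := by simp [mulVec, dotProduct, hrow]
    linarith
  exact ⟨hiS, fun j hj => eq_of_le_sum_mul (hRnn i) (hrow1 i hiS) hmax hsub hj⟩

theorem nonpos_of_le_mulVec (hRnn : ∀ i j, 0 ≤ R i j)
    (hrow1 : ∀ i, i ∉ S → ∑ j, R i j = 1) (hrow0 : ∀ i, i ∈ S → ∑ j, R i j = 0)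
    (hout : ∀ i₀ : E, ∃ (l : ℕ) (p : Fin (l + 1) → E), p 0 = i₀ ∧
      p (Fin.last l) ∈ S ∧ 0 < ∏ h : Fin l, R (p h.castSucc) (p h.succ))
    {f : E → ℝ} (hsub : ∀ i, f i ≤ (R *ᵥ f) i) (i : E) : f i ≤ 0 := by
  have : Nonempty E := ⟨i⟩
  obtain ⟨i₀, hmax⟩ := Finite.exists_max f
  by_contra! hi
  have hpos : 0 < f i₀ := hi.trans_le (hmax i)
  have hclosed : ∀ k, f k = f i₀ → k ∉ S ∧ ∀ j, R k j ≠ 0 → f j = f i₀ := fun k hk => by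
    rw [← hk] at hmax hpos ⊢
    exact notMem_and_eq_of_le_mulVec hRnn hrow1 hrow0 hmax hpos (hsub k)
  obtain ⟨l, p, hp0, hpS, hprod⟩ := hout i₀
  have hpath : ∀ k, f (p k) = f i₀ := fun k => by
    induction k using Fin.induction with
    | zero => rw [hp0]
    | succ h ih =>
      exact (hclosed _ ih).2 _ (Finset.prod_ne_zero_iff.1 hprod.ne' h (Finset.mem_univ h))
  exact (hclosed _ (hpath (Fin.last l))).1 hpS

end Substochastic

theorem Complex.le_norm_add_ofReal {μ : ℂ} {d : ℝ} (hμ : 0 ≤ μ.re) : d ≤ ‖μ + d‖ :=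
  calc d ≤ (μ + d).re := by simp [hμ]
    _ ≤ ‖μ + d‖ := Complex.re_le_norm _

theorem norm_le_mulVec_norm {E : Type*} [Fintype E] {R : Matrix E E ℝ} (hRnn : ∀ i j, 0 ≤ R i j)
    {d : E → ℝ} (hd : ∀ i, 0 < d i) {μ : ℂ} (hμ : 0 ≤ μ.re) {v : E → ℂ}
    (hv : ∀ i, (μ + d i) * v i = d i * (R.map Complex.ofReal *ᵥ v) i) (i : E) :
    ‖v i‖ ≤ (R *ᵥ fun j => ‖v j‖) i := by
  refine le_of_mul_le_mul_left ?_ (hd i)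
  calc d i * ‖v i‖ ≤ ‖μ + d i‖ * ‖v i‖ := by
        gcongr; exact Complex.le_norm_add_ofReal hμ
    _ = d i * ‖∑ j, (R i j : ℂ) * v j‖ := by
        rw [← norm_mul, hv i, norm_mul, Complex.norm_real, Real.norm_of_nonneg (hd i).le]; rfl
    _ ≤ d i * ∑ j, R i j * ‖v j‖ := by
        refine mul_le_mul_of_nonneg_left ((norm_sum_le _ _).trans_eq
          (Finset.sum_congr rfl fun j _ => ?_)) (hd i).le
        rw [norm_mul, Complex.norm_real, Real.norm_of_nonneg (hRnn i j)]

theorem Matrix.exists_vecMul_eq_smul_of_mem_spectrum {n K : Type*} [Fintype n] [DecidableEq n]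
    [Field K] {M : Matrix n n K} {μ : K} (hμ : μ ∈ spectrum K M) :
    ∃ v ≠ 0, v ᵥ* M = μ • v := by
  rw [spectrum.mem_iff, isUnit_iff_isUnit_det, isUnit_iff_ne_zero, not_not] at hμ
  obtain ⟨v, hv, hvM⟩ := exists_vecMul_eq_zero_iff.mpr hμ
  refine ⟨v, hv, ?_⟩
  rw [Algebra.algebraMap_eq_smul_one, vecMul_sub, vecMul_smul, vecMul_one, sub_eq_zero] at hvM
  exact hvM.symm

theorem Matrix.vecMul_neg_one_sub_transpose_mul_diagonal_eq_smul_iff {n K : Type*} [Fintype n]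
    [DecidableEq n] [CommRing K] (R : Matrix n n K) (d v : n → K) (μ : K) :
    v ᵥ* (-(1 - Rᵀ) * diagonal d) = μ • v ↔ ∀ i, (μ + d i) * v i = d i * (R *ᵥ v) i := by
  rw [← vecMul_vecMul, vecMul_neg, vecMul_sub, vecMul_one, vecMul_transpose, funext_iff]
  refine forall_congr' fun i => ?_
  simp only [Pi.neg_apply, vecMul_diagonal, Pi.sub_apply, Pi.smul_apply, smul_eq_mul]
  constructor <;> intro h <;> linear_combination -h

theorem hurwitz_stable_general
    {E : Type*} [Fintype E] [DecidableEq E]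
    (S : Finset E)
    (R : Matrix E E ℝ)
    (hRnn : ∀ i j, 0 ≤ R i j)
    (hrow1 : ∀ i, i ∉ S → ∑ j, R i j = 1)
    (hrow0 : ∀ i, i ∈ S → ∑ j, R i j = 0)
    (hout : ∀ i₀ : E, ∃ (l : ℕ) (p : Fin (l + 1) → E), p 0 = i₀ ∧
      p (Fin.last l) ∈ S ∧ 0 < ∏ h : Fin l, R (p h.castSucc) (p h.succ))
    (D : Matrix E E ℝ)
    (hDdiag : ∀ i j, i ≠ j → D i j = 0)
    (hDpos : ∀ i, 0 < D i i) :
    ∀ μ ∈ spectrum ℂ ((-(1 - Rᵀ) * D).map (Complex.ofReal ·)), μ.re < 0 := by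
  intro μ hμ
  by_contra! hre
  obtain ⟨d, rfl⟩ : ∃ d, D = diagonal d := ⟨_, (IsDiag.diagonal_diag hDdiag).symm⟩
  simp only [diagonal_apply_eq] at hDpos
  have hA : (-(1 - Rᵀ) * diagonal d).map Complex.ofReal =
      -(1 - (R.map Complex.ofReal)ᵀ) * diagonal fun i => (d i : ℂ) := by
    change Complex.ofRealHom.mapMatrix _ = _
    simp only [map_mul, map_neg, map_sub, map_one, RingHom.mapMatrix_apply, transpose_map,
      diagonal_map, Complex.ofRealHom_eq_coe, Complex.ofReal_zero]
    rfl
  obtain ⟨v, hv0, hv⟩ := exists_vecMul_eq_smul_of_mem_spectrum hμ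
  rw [hA, vecMul_neg_one_sub_transpose_mul_diagonal_eq_smul_iff] at hv
  have hnorm := nonpos_of_le_mulVec hRnn hrow1 hrow0 hout (norm_le_mulVec_norm hRnn hDpos hre hv)
  exact hv0 (funext fun i => norm_le_zero_iff.1 (hnorm i))

/-- Under the nonnegativity, row-sum and out-connectedness assumptions on `R`,
and for a diagonal matrix `D` with strictly positive diagonal entries, every (complex)
eigenvalue of `A = -(I - Rᵀ) * D` has strictly negative real part (`A` is Hurwitz stable). -/
theorem hurwitz_stable
    {E : Type*} [Fintype E] [DecidableEq E] [Nonempty E]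
    (S : Finset E) (hS : S.Nonempty)
    (R : Matrix E E ℝ)
    (hRnn : ∀ i j, 0 ≤ R i j)
    (hrow1 : ∀ i, i ∉ S → ∑ j, R i j = 1)
    (hrow0 : ∀ i, i ∈ S → ∑ j, R i j = 0)
    (hout : ∀ i₀ : E, ∃ (l : ℕ) (p : Fin (l + 1) → E), p 0 = i₀ ∧
      p (Fin.last l) ∈ S ∧ 0 < ∏ h : Fin l, R (p h.castSucc) (p h.succ))
    (D : Matrix E E ℝ)
    (hDdiag : ∀ i j, i ≠ j → D i j = 0)
    (hDpos : ∀ i, 0 < D i i) :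
    ∀ μ ∈ spectrum ℂ ((-(1 - Rᵀ) * D).map (Complex.ofReal ·)), μ.re < 0 :=
  hurwitz_stable_general S R hRnn hrow1 hrow0 hout D hDdiag hDpos
end

section
/- For every two solutions x, y : [0,T] → ℝⁿ of the differential equation u' = f(u) such that x(t) ∈ D and y(t) ∈ D for all t ∈ [0,T], one has ‖x(t) − y(t)‖₁ ≤ ‖x(0) − y(0)‖₁ for all t ∈ [0,T]; i.e., the dynamics are l1-nonexpansive on D. -/
/-!
Write `w = x - y`. At each `t ∈ [0, T)` the function `t ↦ ‖w t‖₁` has the right derivative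
`σ ⬝ᵥ (f (x t) - f (y t))` for a vector `σ` with `|σ i| ≤ 1` and `σ i * w t i = |w t i|`
(`σ i` is the sign of `w t i`, or of its derivative where `w t i = 0`). By the mean value
theorem on the segment `[y t, x t] ⊆ D` this is `σ ⬝ᵥ J z (x t - y t)` for some `z ∈ D`, and
for a Metzler matrix `J` with nonpositive column sums `σ ⬝ᵥ J v ≤ ∑ j, |v j| * ∑ i, J i j ≤ 0`.
A continuous function with nonpositive right derivatives on `[0, T)` is nonincreasing.
-/

open Set Matrix

namespace Matrix

variable {ι R : Type*} [Fintype ι]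

def IsMetzler [Zero R] [LE R] (A : Matrix ι ι R) : Prop := ∀ i j, i ≠ j → 0 ≤ A i j

theorem IsMetzler.dotProduct_mulVec_nonpos [CommRing R] [LinearOrder R]
    [IsStrictOrderedRing R] {A : Matrix ι ι R} (hA : A.IsMetzler) (hcol : ∀ j, ∑ i, A i j ≤ 0)
    {σ v : ι → R} (hσ : ∀ i, |σ i| ≤ 1) (hσv : ∀ i, σ i * v i = |v i|) : σ ⬝ᵥ (A *ᵥ v) ≤ 0 := by
  rw [dot_mulVec_eq_sum_sum]
  refine Finset.sum_nonpos fun j _ => ?_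
  have hterm : ∀ i, σ i * A i j * v j ≤ A i j * |v j| := by
    intro i
    obtain rfl | hij := eq_or_ne i j
    · rw [mul_right_comm, hσv, mul_comm]
    · have hσv' : σ i * v j ≤ |v j| := (le_abs_self _).trans <| by
        rw [abs_mul]; exact mul_le_of_le_one_left (abs_nonneg _) (hσ i)
      calc σ i * A i j * v j = A i j * (σ i * v j) := by ring
        _ ≤ A i j * |v j| := mul_le_mul_of_nonneg_left hσv' (hA i j hij)
  calc ∑ i, σ i * A i j * v j ≤ ∑ i, A i j * |v j| := Finset.sum_le_sum fun i _ => hterm i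
    _ = (∑ i, A i j) * |v j| := (Finset.sum_mul ..).symm
    _ ≤ 0 := mul_nonpos_of_nonpos_of_nonneg (hcol j) (abs_nonneg _)

end Matrix

theorem Convex.apply_sub_nonpos_of_hasFDerivWithinAt {E F : Type*} [NormedAddCommGroup E]
    [NormedSpace ℝ E] [NormedAddCommGroup F] [NormedSpace ℝ F] {D : Set E} (hD : Convex ℝ D)
    {f : E → F} {f' : E → E →L[ℝ] F} (hf : ∀ z ∈ D, HasFDerivWithinAt f (f' z) D z)
    (ℓ : F →L[ℝ] ℝ) {a b : E} (ha : a ∈ D) (hb : b ∈ D)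
    (hℓ : ∀ z ∈ D, ℓ (f' z (a - b)) ≤ 0) : ℓ (f a - f b) ≤ 0 := by
  obtain ⟨z, hz, hmvt⟩ :=
    domain_mvt (fun z hz => ℓ.hasFDerivAt.comp_hasFDerivWithinAt z (hf z hz)) hD hb ha
  rw [map_sub]
  exact hmvt ▸ hℓ z (hD.segment_subset hb ha hz)

theorem Convex.dotProduct_sub_nonpos_of_isMetzler {ι : Type*} [Fintype ι] [DecidableEq ι]
    {D : Set (ι → ℝ)} (hD : Convex ℝ D) {f : (ι → ℝ) → ι → ℝ}
    {f' : (ι → ℝ) → (ι → ℝ) →L[ℝ] ι → ℝ} (hf : ∀ z ∈ D, HasFDerivWithinAt f (f' z) D z)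
    (hM : ∀ z ∈ D, (LinearMap.toMatrix' (f' z).toLinearMap).IsMetzler)
    (hcol : ∀ z ∈ D, ∀ j, ∑ i, LinearMap.toMatrix' (f' z).toLinearMap i j ≤ 0)
    {a b : ι → ℝ} (ha : a ∈ D) (hb : b ∈ D) {σ : ι → ℝ} (hσ : ∀ i, |σ i| ≤ 1)
    (hσab : ∀ i, σ i * (a i - b i) = |a i - b i|) : σ ⬝ᵥ (f a - f b) ≤ 0 := by
  refine hD.apply_sub_nonpos_of_hasFDerivWithinAt hf
    (LinearMap.toContinuousLinearMap (dotProductBilin ℝ ℝ σ)) ha hb fun z hz => ?_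
  simpa [LinearMap.toMatrix'_mulVec] using
    (hM z hz).dotProduct_mulVec_nonpos (hcol z hz) hσ (v := a - b) hσab

theorem SignType.abs_coe_le_one {R : Type*} [Ring R] [LinearOrder R] [IsOrderedRing R]
    (s : SignType) : |(s : R)| ≤ 1 := by
  cases s <;> simp

theorem HasDerivWithinAt.abs_of_eq_zero_of_subset_Ici {w : ℝ → ℝ} {d t : ℝ} {s : Set ℝ}
    (h : HasDerivWithinAt w d s t) (hw : w t = 0) (hs : s ⊆ Ici t) :
    HasDerivWithinAt (fun z => |w z|) |d| s t := by
  rw [hasDerivWithinAt_iff_tendsto_slope] at h ⊢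
  refine ((continuous_abs.tendsto d).comp h).congr' ?_
  filter_upwards [self_mem_nhdsWithin] with z ⟨hzs, hzt⟩
  have hpos : 0 < z - t := sub_pos.2 ((hs hzs).lt_of_ne' hzt)
  simp [slope_def_field, hw, abs_div, abs_of_pos hpos]

theorem HasDerivWithinAt.exists_abs_of_subset_Ici {w : ℝ → ℝ} {d t : ℝ} {s : Set ℝ}
    (h : HasDerivWithinAt w d s t) (hs : s ⊆ Ici t) :
    ∃ σ : ℝ, |σ| ≤ 1 ∧ σ * w t = |w t| ∧ HasDerivWithinAt (fun z => |w z|) (σ * d) s t := by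
  by_cases hw : w t = 0
  · refine ⟨SignType.sign d, SignType.abs_coe_le_one _, by simp [hw], ?_⟩
    simpa using h.abs_of_eq_zero_of_subset_Ici hw hs
  · exact ⟨SignType.sign (w t), SignType.abs_coe_le_one _, sign_mul_self _,
      (hasDerivAt_abs hw).comp_hasDerivWithinAt t h⟩

theorem HasDerivWithinAt.exists_sum_abs_of_subset_Ici {ι : Type*} [Fintype ι]
    {w : ℝ → ι → ℝ} {d : ι → ℝ} {t : ℝ} {s : Set ℝ} (h : HasDerivWithinAt w d s t)
    (hs : s ⊆ Ici t) :
    ∃ σ : ι → ℝ, (∀ i, |σ i| ≤ 1) ∧ (∀ i, σ i * w t i = |w t i|) ∧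
      HasDerivWithinAt (fun z => ∑ i, |w z i|) (σ ⬝ᵥ d) s t := by
  choose σ hσ hσw hderiv using
    fun i => (hasDerivWithinAt_pi.1 h i).exists_abs_of_subset_Ici hs
  exact ⟨σ, hσ, hσw, HasDerivWithinAt.fun_sum fun i _ => hderiv i⟩

theorem image_le_of_forall_exists_hasDerivWithinAt_Ici_nonpos {g : ℝ → ℝ} {a b : ℝ}
    (hg : ContinuousOn g (Icc a b))
    (hg' : ∀ t ∈ Ico a b, ∃ g' ≤ 0, HasDerivWithinAt g g' (Ici t) t) :
    ∀ t ∈ Icc a b, g t ≤ g a := by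
  choose! g' hg'_nonpos hg'_deriv using hg'
  exact image_le_of_deriv_right_le_deriv_boundary hg hg'_deriv le_rfl continuousOn_const
    (fun _ _ => hasDerivWithinAt_const _ _ _) hg'_nonpos

theorem l1_nonexpansive_of_metzler_nonpositive_columns_general
    {n : ℕ} (D : Set (Fin n → ℝ)) (hD : Convex ℝ D)
    (f : (Fin n → ℝ) → (Fin n → ℝ))
    (U : Set (Fin n → ℝ)) (hU : IsOpen U) (hDU : D ⊆ U)
    (hf : ContDiffOn ℝ 1 f U)
    (hMetzler : ∀ x ∈ D, ∀ i j, i ≠ j → 0 ≤ fderiv ℝ f x (Pi.single j 1) i)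
    (hcol : ∀ x ∈ D, ∀ j, ∑ i, fderiv ℝ f x (Pi.single j 1) i ≤ 0)
    {T : ℝ}
    (x y : ℝ → Fin n → ℝ)
    (hx : ∀ t ∈ Set.Icc (0 : ℝ) T, HasDerivWithinAt x (f (x t)) (Set.Icc 0 T) t)
    (hy : ∀ t ∈ Set.Icc (0 : ℝ) T, HasDerivWithinAt y (f (y t)) (Set.Icc 0 T) t)
    (hxD : ∀ t ∈ Set.Icc (0 : ℝ) T, x t ∈ D)
    (hyD : ∀ t ∈ Set.Icc (0 : ℝ) T, y t ∈ D) :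
    ∀ t ∈ Set.Icc (0 : ℝ) T, ∑ i, |x t i - y t i| ≤ ∑ i, |x 0 i - y 0 i| := by
  have hfD : ∀ z ∈ D, HasFDerivWithinAt f (fderiv ℝ f z) D z := fun z hz =>
    ((hf.differentiableOn one_ne_zero).differentiableAt
      (hU.mem_nhds (hDU hz))).hasFDerivAt.hasFDerivWithinAt
  have hw : ∀ t ∈ Icc (0 : ℝ) T, HasDerivWithinAt (x - y) (f (x t) - f (y t)) (Icc 0 T) t :=
    fun t ht => (hx t ht).sub (hy t ht)
  have hwc : ContinuousOn (x - y) (Icc 0 T) := fun t ht => (hw t ht).continuousWithinAt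
  refine image_le_of_forall_exists_hasDerivWithinAt_Ici_nonpos
    (continuousOn_finsetSum _ fun i _ => ((continuous_apply i).comp_continuousOn hwc).abs)
    fun t ht => ?_
  have ht' : t ∈ Icc 0 T := Ico_subset_Icc_self ht
  obtain ⟨σ, hσ, hσw, hderiv⟩ :=
    ((hw t ht').mono (Icc_subset_Icc_left ht.1)).exists_sum_abs_of_subset_Ici
      Icc_subset_Ici_self
  refine ⟨_, hD.dotProduct_sub_nonpos_of_isMetzler hfD (fun z hz i j hij => ?_)
    (fun z hz j => ?_) (hxD t ht') (hyD t ht') hσ hσw,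
    hderiv.mono_of_mem_nhdsWithin (Icc_mem_nhdsGE ht.2)⟩
  · simpa using hMetzler z hz i j hij
  · simpa using hcol z hz j

/-- if `f` is continuously differentiable on a neighborhood of a convex set `D`
and at every point of `D` its Jacobian is Metzler with nonpositive column sums, then any two
solutions of `u' = f u` remaining in `D` on `[0, T]` satisfy
`‖x t - y t‖₁ ≤ ‖x 0 - y 0‖₁`: the dynamics are `l1`-nonexpansive on `D`. -/
theorem l1_nonexpansive_of_metzler_nonpositive_columns
    {n : ℕ} (D : Set (Fin n → ℝ)) (hD : Convex ℝ D)
    (f : (Fin n → ℝ) → (Fin n → ℝ))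
    (U : Set (Fin n → ℝ)) (hU : IsOpen U) (hDU : D ⊆ U)
    (hf : ContDiffOn ℝ 1 f U)
    (hMetzler : ∀ x ∈ D, ∀ i j, i ≠ j → 0 ≤ fderiv ℝ f x (Pi.single j 1) i)
    (hcol : ∀ x ∈ D, ∀ j, ∑ i, fderiv ℝ f x (Pi.single j 1) i ≤ 0)
    {T : ℝ} (hT : 0 ≤ T)
    (x y : ℝ → Fin n → ℝ)
    (hx : ∀ t ∈ Set.Icc (0 : ℝ) T, HasDerivWithinAt x (f (x t)) (Set.Icc 0 T) t)
    (hy : ∀ t ∈ Set.Icc (0 : ℝ) T, HasDerivWithinAt y (f (y t)) (Set.Icc 0 T) t)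
    (hxD : ∀ t ∈ Set.Icc (0 : ℝ) T, x t ∈ D)
    (hyD : ∀ t ∈ Set.Icc (0 : ℝ) T, y t ∈ D) :
    ∀ t ∈ Set.Icc (0 : ℝ) T, ∑ i, |x t i - y t i| ≤ ∑ i, |x 0 i - y 0 i| :=
  l1_nonexpansive_of_metzler_nonpositive_columns_general D hD f U hU hDU hf hMetzler hcol x y hx hy
    hxD hyD
end

section
/- If the flow φ is l1-nonexpansive on B_δ(x*) — meaning that for all x, y ∈ B_δ(x*) and all T ≥ 0 such that φ(s,x), φ(s,y) ∈ B_δ(x*) for all 0 ≤ s ≤ T, one has ‖φ(t,y) − φ(t,x)‖₁ ≤ ‖y − x‖₁ for all 0 ≤ t ≤ T — then B_δ(x*) ⊆ A(x*), i.e., every trajectory starting in B_δ(x*) converges to x*. -/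
/-- The `l1` norm of a vector: sum of absolute values of entries. -/
noncomputable def norm1 {n : ℕ} (v : Fin n → ℝ) : ℝ := ∑ i, |v i|

/-!
Nonexpansiveness against the fixed point `x*` keeps every trajectory that starts in `B_δ(x*)` at
most as far from `x*` as it started, so the ball is forward invariant and the flow is
nonexpansive on it for all times. Let `B_ρ(x*)`, `ρ ≤ δ`, lie in the basin given by asymptotic
stability. While a trajectory stays at distance at least `ρ` from `x*`, compare its current
position `z` with the point `y` of the segment `[x*, z]` at distance `ρ / 2` from `x*`: the
trajectory of `y` tends to `x*`, and the two trajectories stay within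
`dist z y = dist z x* - ρ / 2` of each other, so the distance to `x*` eventually drops by
`ρ / 4`. This is incompatible with the infimum of that distance, so the trajectory enters
`B_ρ(x*)` and converges to `x*`.

Only the fact that `‖·‖₁` is a norm matters: it is the norm of `PiLp 1`.
-/

open Set Filter Topology Metric WithLp

section ODE

variable {E : Type*} [NormedAddCommGroup E] [NormedSpace ℝ E] {f : E → E} {K : NNReal}
  {φ : ℝ → E → E}

theorem flow_continuousOn
    (hφ' : ∀ x, ∀ t : ℝ, 0 ≤ t → HasDerivWithinAt (fun s => φ s x) (f (φ t x)) (Ici 0) t)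
    (x : E) : ContinuousOn (fun t => φ t x) (Ici 0) :=
  fun t ht => (hφ' x t ht).continuousWithinAt

theorem flow_eq_of_equilibrium (hf : LipschitzWith K f) (hφ0 : ∀ x, φ 0 x = x)
    (hφ' : ∀ x, ∀ t : ℝ, 0 ≤ t → HasDerivWithinAt (fun s => φ s x) (f (φ t x)) (Ici 0) t)
    {x₀ : E} (hx₀ : f x₀ = 0) {t : ℝ} (ht : 0 ≤ t) : φ t x₀ = x₀ :=
  ODE_solution_unique (v := fun _ => f) (fun _ => hf)
    ((flow_continuousOn hφ' x₀).mono Icc_subset_Ici_self)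
    (fun s hs => (hφ' x₀ s hs.1).mono (Ici_subset_Ici.mpr hs.1)) continuousOn_const
    (fun s _ => by simpa [hx₀] using hasDerivWithinAt_const s (Ici s) x₀) (hφ0 x₀)
    ⟨ht, le_rfl⟩

theorem flow_add (hf : LipschitzWith K f) (hφ0 : ∀ x, φ 0 x = x)
    (hφ' : ∀ x, ∀ t : ℝ, 0 ≤ t → HasDerivWithinAt (fun s => φ s x) (f (φ t x)) (Ici 0) t)
    (x : E) {s t : ℝ} (hs : 0 ≤ s) (ht : 0 ≤ t) : φ (s + t) x = φ t (φ s x) := by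
  have hshift : MapsTo (s + ·) (Ici (0 : ℝ)) (Ici 0) := fun u hu => add_nonneg hs hu
  refine ODE_solution_unique (v := fun _ => f) (fun _ => hf)
    ((flow_continuousOn hφ' x).comp (by fun_prop) (hshift.mono_left Icc_subset_Ici_self))
    (fun u hu => ?_) ((flow_continuousOn hφ' _).mono Icc_subset_Ici_self)
    (fun u hu => (hφ' _ u hu.1).mono (Ici_subset_Ici.mpr hu.1)) (by simp [hφ0]) ⟨ht, le_rfl⟩
  have := (hφ' x (s + u) (add_nonneg hs hu.1)).scomp u
    ((hasDerivAt_id u).const_add s).hasDerivWithinAt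
    (hshift.mono_left (Ici_subset_Ici.mpr hu.1))
  simpa [Function.comp_def] using this

end ODE

theorem forall_lt_of_continuousOn_Ici {g : ℝ → ℝ} {r c : ℝ} (hg : ContinuousOn g (Ici 0))
    (h0 : g 0 < c) (hrc : r < c) (hle : ∀ t, 0 ≤ t → (∀ s ∈ Icc 0 t, g s < c) → g t ≤ r)
    {t : ℝ} (ht : 0 ≤ t) : g t < c := by
  by_contra! hct
  set S := Ici 0 ∩ g ⁻¹' Ici c
  have hbdd : BddBelow S := ⟨0, fun _ hs => hs.1⟩
  have hexit : sInf S ∈ S :=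
    (hg.preimage_isClosed_of_isClosed isClosed_Ici isClosed_Ici).csInf_mem ⟨t, ht, hct⟩ hbdd
  have hbefore : ∀ s ∈ Ico 0 (sInf S), g s < c := fun s hs =>
    lt_of_not_ge fun hsc => (csInf_le hbdd ⟨hs.1, hsc⟩).not_gt hs.2
  have hpos : 0 < sInf S := hexit.1.lt_of_ne fun h => (h ▸ hexit.2 : c ≤ g 0).not_gt h0
  have hexit_le : g (sInf S) ≤ r := by
    have hcl : sInf S ∈ closure (Ico 0 (sInf S)) := by
      rw [closure_Ico hpos.ne]; exact right_mem_Icc.mpr hexit.1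
    refine isClosed_Iic.closure_subset
      (((hg _ hexit.1).mono Ico_subset_Ici_self).mem_closure hcl fun s hs => ?_)
    exact hle s hs.1 fun u hu => hbefore u ⟨hu.1, hu.2.trans_lt hs.2⟩
  exact (hexit_le.trans_lt hrc).not_ge hexit.2

def FlowNonexpansiveOn {X : Type*} [PseudoMetricSpace X] (φ : ℝ → X → X) (s : Set X) : Prop :=
  ∀ x ∈ s, ∀ y ∈ s, ∀ t, 0 ≤ t → (∀ τ ∈ Icc 0 t, φ τ x ∈ s ∧ φ τ y ∈ s) →
    dist (φ t x) (φ t y) ≤ dist x y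

theorem tendsto_flow_of_tendsto_flow_apply {X : Type*} {φ : ℝ → X → X}
    (hsemi : ∀ x s t, 0 ≤ s → 0 ≤ t → φ (s + t) x = φ t (φ s x)) {x : X} {s : ℝ} (hs : 0 ≤ s)
    {l : Filter X} (h : Tendsto (φ · (φ s x)) atTop l) : Tendsto (φ · x) atTop l := by
  refine (h.comp (tendsto_atTop_add_const_right atTop (-s) tendsto_id)).congr' ?_
  filter_upwards [eventually_ge_atTop s] with u hu
  simp only [Function.comp_apply, id_eq]
  rw [← hsemi x s _ hs (by linarith)]
  ring_nf

namespace FlowNonexpansiveOn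

section PseudoMetric

variable {X : Type*} [PseudoMetricSpace X] {φ : ℝ → X → X} {x₀ : X} {δ : ℝ}

theorem mapsTo_ball (h : FlowNonexpansiveOn φ (ball x₀ δ))
    (hcont : ∀ x, ContinuousOn (φ · x) (Ici 0)) (hφ0 : ∀ x, φ 0 x = x)
    (hfix : ∀ t, 0 ≤ t → φ t x₀ = x₀) {x : X} (hx : x ∈ ball x₀ δ) {t : ℝ} (ht : 0 ≤ t) :
    φ t x ∈ ball x₀ δ := by
  have hx₀ : x₀ ∈ ball x₀ δ := mem_ball_self (pos_of_mem_ball hx)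
  refine forall_lt_of_continuousOn_Ici (g := fun τ => dist (φ τ x) x₀)
    ((continuous_id.dist continuous_const).comp_continuousOn (hcont x)) (by rwa [hφ0]) hx
    (fun τ hτ hin => ?_) ht
  simpa [hfix τ hτ] using
    h x hx x₀ hx₀ τ hτ fun u hu => ⟨hin u hu, (hfix u hu.1).symm ▸ hx₀⟩

theorem dist_le (h : FlowNonexpansiveOn φ (ball x₀ δ))
    (hcont : ∀ x, ContinuousOn (φ · x) (Ici 0)) (hφ0 : ∀ x, φ 0 x = x)
    (hfix : ∀ t, 0 ≤ t → φ t x₀ = x₀) {x y : X} (hx : x ∈ ball x₀ δ) (hy : y ∈ ball x₀ δ)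
    {t : ℝ} (ht : 0 ≤ t) : dist (φ t x) (φ t y) ≤ dist x y :=
  h x hx y hy t ht fun _ hτ =>
    ⟨h.mapsTo_ball hcont hφ0 hfix hx hτ.1, h.mapsTo_ball hcont hφ0 hfix hy hτ.1⟩

end PseudoMetric

variable {E : Type*} [NormedAddCommGroup E] [NormedSpace ℝ E] {φ : ℝ → E → E} {x₀ : E} {δ : ℝ}

theorem exists_dist_lt_sub (h : FlowNonexpansiveOn φ (ball x₀ δ))
    (hcont : ∀ x, ContinuousOn (φ · x) (Ici 0)) (hφ0 : ∀ x, φ 0 x = x)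
    (hfix : ∀ t, 0 ≤ t → φ t x₀ = x₀) {ρ : ℝ} (hρ : 0 < ρ) (hρδ : ρ ≤ δ)
    (hattr : ∀ y ∈ ball x₀ ρ, Tendsto (φ · y) atTop (𝓝 x₀)) {z : E} (hz : z ∈ ball x₀ δ)
    (hρz : ρ ≤ dist z x₀) : ∃ t, 0 ≤ t ∧ dist (φ t z) x₀ < dist z x₀ - ρ / 4 := by
  have hz₀ : 0 < dist z x₀ := hρ.trans_le hρz
  set c := ρ / (2 * dist z x₀)
  have hc : c * dist z x₀ = ρ / 2 := by simp only [c]; field_simp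
  have hc₀ : 0 ≤ c := by positivity
  have hc₁ : c ≤ 1 := (div_le_one (by positivity)).mpr (by linarith)
  set y := AffineMap.lineMap x₀ z c
  have hyx₀ : dist y x₀ = ρ / 2 := by
    rw [dist_lineMap_left, Real.norm_of_nonneg hc₀, dist_comm, hc]
  have hzy : dist z y = dist z x₀ - ρ / 2 := by
    rw [dist_comm, dist_lineMap_right, Real.norm_of_nonneg (by linarith), dist_comm, sub_mul,
      one_mul, hc]
  have hyρ : y ∈ ball x₀ ρ := by rw [mem_ball, hyx₀]; linarith
  obtain ⟨t, ht, hyt⟩ := ((eventually_ge_atTop 0).and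
    ((hattr y hyρ).eventually (ball_mem_nhds x₀ (by positivity : 0 < ρ / 4)))).exists
  refine ⟨t, ht, ?_⟩
  calc dist (φ t z) x₀ ≤ dist (φ t z) (φ t y) + dist (φ t y) x₀ := dist_triangle _ _ _
    _ < dist z y + ρ / 4 :=
      add_lt_add_of_le_of_lt (h.dist_le hcont hφ0 hfix hz (ball_subset_ball hρδ hyρ) ht) hyt
    _ = dist z x₀ - ρ / 4 := by rw [hzy]; ring

theorem tendsto (h : FlowNonexpansiveOn φ (ball x₀ δ))
    (hcont : ∀ x, ContinuousOn (φ · x) (Ici 0)) (hφ0 : ∀ x, φ 0 x = x)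
    (hfix : ∀ t, 0 ≤ t → φ t x₀ = x₀)
    (hsemi : ∀ x s t, 0 ≤ s → 0 ≤ t → φ (s + t) x = φ t (φ s x))
    (hattr : ∃ η₀ > 0, ∀ y ∈ ball x₀ η₀, Tendsto (φ · y) atTop (𝓝 x₀))
    {x : E} (hx : x ∈ ball x₀ δ) : Tendsto (φ · x) atTop (𝓝 x₀) := by
  obtain ⟨η₀, hη₀, hattr⟩ := hattr
  set ρ := min δ η₀
  have hρ : 0 < ρ := lt_min (pos_of_mem_ball hx) hη₀
  have hattrρ : ∀ y ∈ ball x₀ ρ, Tendsto (φ · y) atTop (𝓝 x₀) :=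
    fun y hy => hattr y (ball_subset_ball (min_le_right _ _) hy)
  suffices ∃ s, 0 ≤ s ∧ φ s x ∈ ball x₀ ρ by
    obtain ⟨s, hs, hsρ⟩ := this
    exact tendsto_flow_of_tendsto_flow_apply hsemi hs (hattrρ _ hsρ)
  by_contra! hfar
  let d : Ici (0 : ℝ) → ℝ := fun s => dist (φ s x) x₀
  have hbdd : BddBelow (range d) := ⟨0, by rintro _ ⟨s, rfl⟩; exact dist_nonneg⟩
  obtain ⟨s, hs⟩ :=
    exists_lt_of_ciInf_lt (lt_add_of_pos_right (⨅ s, d s) (by positivity : 0 < ρ / 4))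
  obtain ⟨t, ht, hlt⟩ := h.exists_dist_lt_sub hcont hφ0 hfix hρ (min_le_left _ _) hattrρ
    (h.mapsTo_ball hcont hφ0 hfix hx s.2) (not_lt.mp (hfar s s.2))
  have hinf := ciInf_le hbdd ⟨s + t, add_nonneg s.2 ht⟩
  simp only [d, hsemi x s t s.2 ht] at hinf hs
  linarith

end FlowNonexpansiveOn

theorem norm1_sub_eq_dist_toLp {n : ℕ} (a b : Fin n → ℝ) :
    norm1 (a - b) = dist (toLp 1 a) (toLp 1 b) := by
  simp [norm1, PiLp.dist_eq_of_L1, Real.dist_eq]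

theorem ball_subset_region_of_attraction_general
    {n : ℕ} (f : (Fin n → ℝ) → (Fin n → ℝ)) (L : NNReal) (hf : LipschitzWith L f)
    (φ : ℝ → (Fin n → ℝ) → (Fin n → ℝ))
    (hφ0 : ∀ x, φ 0 x = x)
    (hφ' : ∀ x, ∀ t : ℝ, 0 ≤ t →
      HasDerivWithinAt (fun s => φ s x) (f (φ t x)) (Set.Ici 0) t)
    (xstar : Fin n → ℝ) (hxstar : f xstar = 0)
    (hattr : ∃ η₀ > (0 : ℝ), ∀ x, norm1 (x - xstar) < η₀ →
      Filter.Tendsto (fun t => φ t x) Filter.atTop (nhds xstar))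
    (δ : ℝ)
    (hnonexp : ∀ x y, norm1 (x - xstar) < δ → norm1 (y - xstar) < δ →
      ∀ T : ℝ, 0 ≤ T →
        (∀ s : ℝ, 0 ≤ s → s ≤ T → norm1 (φ s x - xstar) < δ ∧ norm1 (φ s y - xstar) < δ) →
        ∀ t : ℝ, 0 ≤ t → t ≤ T → norm1 (φ t y - φ t x) ≤ norm1 (y - x)) :
    ∀ x, norm1 (x - xstar) < δ →
      Filter.Tendsto (fun t => φ t x) Filter.atTop (nhds xstar) := by
  let ψ : ℝ → PiLp 1 (fun _ : Fin n => ℝ) → PiLp 1 (fun _ : Fin n => ℝ) :=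
    fun t v => toLp 1 (φ t (ofLp v))
  have hmem : ∀ x r, norm1 (x - xstar) < r ↔ toLp 1 x ∈ ball (toLp 1 xstar) r := by
    simp [norm1_sub_eq_dist_toLp]
  have hψ : FlowNonexpansiveOn ψ (ball (toLp 1 xstar) δ) := by
    intro v hv w hw t ht hin
    simpa [norm1_sub_eq_dist_toLp] using
      hnonexp (ofLp w) (ofLp v) ((hmem _ _).2 hw) ((hmem _ _).2 hv) t ht
        (fun s hs hst => (hin s ⟨hs, hst⟩).symm.imp (hmem _ _).2 (hmem _ _).2) t ht le_rfl
  obtain ⟨η₀, hη₀, hattr⟩ := hattr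
  intro x hx
  have hψx := hψ.tendsto (x := toLp 1 x)
    (fun v => (PiLp.continuous_toLp 1 _).comp_continuousOn (flow_continuousOn hφ' _))
    (fun v => by simp [ψ, hφ0])
    (fun t ht => by simp [ψ, flow_eq_of_equilibrium hf hφ0 hφ' hxstar ht])
    (fun v s t hs ht => by simp [ψ, flow_add hf hφ0 hφ' _ hs ht])
    ⟨η₀, hη₀, fun w hw => ((PiLp.continuous_toLp 1 _).tendsto _).comp (hattr _ ((hmem _ _).2 hw))⟩
    ((hmem x δ).1 hx)
  exact ((PiLp.continuous_ofLp 1 _).tendsto _).comp hψx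

/-- let `φ` be the flow of a Lipschitz vector field `f`, `xstar` an
asymptotically stable equilibrium. If the flow is `l1`-nonexpansive on the ball
`B_δ(xstar)`, then `B_δ(xstar)` is contained in the region of attraction of `xstar`. -/
theorem ball_subset_region_of_attraction
    {n : ℕ} (f : (Fin n → ℝ) → (Fin n → ℝ)) (L : NNReal) (hf : LipschitzWith L f)
    (φ : ℝ → (Fin n → ℝ) → (Fin n → ℝ))
    (hφ0 : ∀ x, φ 0 x = x)
    (hφ' : ∀ x, ∀ t : ℝ, 0 ≤ t →
      HasDerivWithinAt (fun s => φ s x) (f (φ t x)) (Set.Ici 0) t)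
    (xstar : Fin n → ℝ) (hxstar : f xstar = 0)
    (hstable : ∀ ε > (0 : ℝ), ∃ η > (0 : ℝ), ∀ x, norm1 (x - xstar) < η →
      ∀ t : ℝ, 0 ≤ t → norm1 (φ t x - xstar) < ε)
    (hattr : ∃ η₀ > (0 : ℝ), ∀ x, norm1 (x - xstar) < η₀ →
      Filter.Tendsto (fun t => φ t x) Filter.atTop (nhds xstar))
    (δ : ℝ) (hδ : 0 < δ)
    (hnonexp : ∀ x y, norm1 (x - xstar) < δ → norm1 (y - xstar) < δ →
      ∀ T : ℝ, 0 ≤ T →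
        (∀ s : ℝ, 0 ≤ s → s ≤ T → norm1 (φ s x - xstar) < δ ∧ norm1 (φ s y - xstar) < δ) →
        ∀ t : ℝ, 0 ≤ t → t ≤ T → norm1 (φ t y - φ t x) ≤ norm1 (y - x)) :
    ∀ x, norm1 (x - xstar) < δ →
      Filter.Tendsto (fun t => φ t x) Filter.atTop (nhds xstar) :=
  ball_subset_region_of_attraction_general f L hf φ hφ0 hφ' xstar hxstar hattr δ hnonexp
end

section
/- If in addition every demand function d_i^k is concave and every supply function s_i is concave, then each capacity region C_i is a convex subset of ℝ≥0^K and the stability region Λ is a convex subset of ℝ≥0^{E×K}. -/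
open Matrix Finset

section MTN

variable {E K : Type*} [Fintype E] [Fintype K] [DecidableEq E]

/-- Total demand of flow directed into cell `j` (the denominator in the non-FIFO rule). -/
noncomputable def inflowDemand (d : E → K → ℝ → ℝ) (R : K → Matrix E E ℝ)
    (x : E → K → ℝ) (j : E) : ℝ :=
  ∑ l, ∑ h, R h l j * d l h (x l h)

/-- The non-FIFO scaling factor `min {1, s_j(Σ_h x_j^h) / inflowDemand j}`,
taken equal to `1` when the denominator vanishes. -/
noncomputable def flowScale (d : E → K → ℝ → ℝ) (s : E → ℝ → ℝ)
    (R : K → Matrix E E ℝ) (x : E → K → ℝ) (j : E) : ℝ :=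
  if inflowDemand d R x j = 0 then 1
  else min 1 (s j (∑ h, x j h) / inflowDemand d R x j)

/-- The non-FIFO inter-cell flow `f_ij^k(x)`. -/
noncomputable def interFlow (d : E → K → ℝ → ℝ) (s : E → ℝ → ℝ)
    (R : K → Matrix E E ℝ) (x : E → K → ℝ) (i j : E) (k : K) : ℝ :=
  R k i j * d i k (x i k) * flowScale d s R x j

/-- Total outflow `z_i^k(x)` of commodity `k` from cell `i`. -/
noncomputable def outFlow (S : Finset E) (d : E → K → ℝ → ℝ) (s : E → ℝ → ℝ)
    (R : K → Matrix E E ℝ) (x : E → K → ℝ) (i : E) (k : K) : ℝ :=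
  if i ∈ S then d i k (x i k) else ∑ j, interFlow d s R x i j k

/-- The right-hand side of the non-FIFO dynamics:
`ẋ_i^k = λ_i^k + Σ_j f_ji^k(x) − z_i^k(x)`. -/
noncomputable def vectorField (S : Finset E) (d : E → K → ℝ → ℝ) (s : E → ℝ → ℝ)
    (R : K → Matrix E E ℝ) (lam : E → K → ℝ) (x : E → K → ℝ) (i : E) (k : K) : ℝ :=
  lam i k + (∑ j, interFlow d s R x j i k) - outFlow S d s R x i k

/-- The free-flow region `F ⊆ X = ℝ≥0^{E×K}`. -/
def FreeFlowRegion (Ron : Finset E) (d : E → K → ℝ → ℝ) (s : E → ℝ → ℝ)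
    (R : K → Matrix E E ℝ) : Set (E → K → ℝ) :=
  {x | (∀ i k, 0 ≤ x i k) ∧
    ∀ i, i ∉ Ron → (∑ k, ∑ j, R k j i * d j k (x j k)) < s i (∑ k, x i k)}

/-- The capacity region `C_i` of a non on-ramp cell, with demand functions `dI` and
supply function `sI`. -/
def capacityRegion (dI : K → ℝ → ℝ) (sI : ℝ → ℝ) : Set (K → ℝ) :=
  {ζ | (∀ k, 0 ≤ ζ k) ∧ ∃ ξ : K → ℝ, (∀ k, 0 ≤ ξ k) ∧ (∀ k, dI k (ξ k) = ζ k) ∧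
    (∑ k, ζ k) < sI (∑ k, ξ k)}

/-- The transported inflow `((I − (R^k)ᵀ)⁻¹ λ^k)_i`. -/
noncomputable def transported (R : K → Matrix E E ℝ) (lam : E → K → ℝ)
    (i : E) (k : K) : ℝ :=
  ((1 - (R k)ᵀ)⁻¹ *ᵥ fun j => lam j k) i

/-- The stability region `Λ`: nonnegative inflows supported on the on-ramps such that
the transported inflow vector lies in the capacity region of every non on-ramp cell. -/
def stabilityRegion (Ron : Finset E) (d : E → K → ℝ → ℝ) (s : E → ℝ → ℝ)
    (R : K → Matrix E E ℝ) : Set (E → K → ℝ) :=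
  {lam | (∀ i k, 0 ≤ lam i k) ∧ (∀ i, i ∉ Ron → ∀ k, lam i k = 0) ∧
    ∀ i, i ∉ Ron → (fun k => transported R lam i k) ∈ capacityRegion (d i) (s i)}

end MTN

/-- if moreover every demand function and every supply function is concave
(on the nonnegative half-line), then each capacity region `C_i` is a convex subset of
`ℝ≥0^K` and the stability region `Λ` is a convex subset of `ℝ≥0^{E×K}`. -/
theorem capacity_and_stability_regions_convex
    {E K : Type*} [Fintype E] [Fintype K] [DecidableEq E] [Nonempty E] [Nonempty K]
    (Ron S : Finset E) (hRonNe : Ron.Nonempty) (hSNe : S.Nonempty) (hdisj : Disjoint Ron S)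
    (d : E → K → ℝ → ℝ) (s : E → ℝ → ℝ) (R : K → Matrix E E ℝ)
    (hd0 : ∀ i k, d i k 0 = 0)
    (hdDiff : ∀ i k, ∀ ξ : ℝ, 0 ≤ ξ → DifferentiableAt ℝ (d i k) ξ)
    (hdpos : ∀ i k, ∀ ξ : ℝ, 0 ≤ ξ → 0 < deriv (d i k) ξ)
    (hdnn : ∀ i k, ∀ ξ : ℝ, 0 ≤ ξ → 0 ≤ d i k ξ)
    (hslip : ∀ i, i ∉ Ron → ∃ L : NNReal, LipschitzOnWith L (s i) (Set.Ici 0))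
    (hsmono : ∀ i, i ∉ Ron → ∀ ξ η : ℝ, 0 ≤ η → η ≤ ξ → s i ξ ≤ s i η)
    (hs0 : ∀ i, i ∉ Ron → 0 < s i 0)
    (hsnn : ∀ i, i ∉ Ron → ∀ ξ : ℝ, 0 ≤ ξ → 0 ≤ s i ξ)
    (hRnn : ∀ k i j, 0 ≤ R k i j)
    (hRzero : ∀ k i j, j ∈ Ron ∨ i ∈ S → R k i j = 0)
    (hRrow1 : ∀ k i, i ∉ S → ∑ j, R k i j = 1)
    (hRrow0 : ∀ k i, i ∈ S → ∑ j, R k i j = 0)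
    (hRout : ∀ k (i₀ : E), ∃ (l : ℕ) (p : Fin (l + 1) → E), p 0 = i₀ ∧
      p (Fin.last l) ∈ S ∧ 0 < ∏ h : Fin l, R k (p h.castSucc) (p h.succ))
    (hdconc : ∀ i k, ConcaveOn ℝ (Set.Ici 0) (d i k))
    (hsconc : ∀ i, i ∉ Ron → ConcaveOn ℝ (Set.Ici 0) (s i)) :
    (∀ i, i ∉ Ron → Convex ℝ (capacityRegion (d i) (s i))) ∧
    Convex ℝ (stabilityRegion Ron d s R) := by
  have hcap : ∀ i, i ∉ Ron → Convex ℝ (capacityRegion (d i) (s i)) := by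
    intro i hi ζ₁ hζ₁ ζ₂ hζ₂ a b ha hb hab
    obtain ⟨h1nn, ξ₁, hξ₁nn, hξ₁eq, hξ₁lt⟩ := hζ₁
    obtain ⟨h2nn, ξ₂, hξ₂nn, hξ₂eq, hξ₂lt⟩ := hζ₂
    have hMnn : ∀ k, (0:ℝ) ≤ a * ξ₁ k + b * ξ₂ k := fun k =>
      add_nonneg (mul_nonneg ha (hξ₁nn k)) (mul_nonneg hb (hξ₂nn k))
    have hζle : ∀ k, a * ζ₁ k + b * ζ₂ k ≤ d i k (a * ξ₁ k + b * ξ₂ k) := by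
      intro k
      have := (hdconc i k).2 (hξ₁nn k) (hξ₂nn k) ha hb hab
      simpa [smul_eq_mul, hξ₁eq k, hξ₂eq k] using this
    have hex : ∀ k, ∃ ξ, ξ ∈ Set.Icc (0:ℝ) (a * ξ₁ k + b * ξ₂ k) ∧
        d i k ξ = a * ζ₁ k + b * ζ₂ k := by
      intro k
      have hcont : ContinuousOn (d i k) (Set.Icc 0 (a * ξ₁ k + b * ξ₂ k)) :=
        fun x hx => ((hdDiff i k x hx.1).continuousAt).continuousWithinAt
      have hiv := intermediate_value_Icc (hMnn k) hcont
      have hmem : a * ζ₁ k + b * ζ₂ k ∈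
          Set.Icc (d i k 0) (d i k (a * ξ₁ k + b * ξ₂ k)) := by
        constructor
        · rw [hd0]
          exact add_nonneg (mul_nonneg ha (h1nn k)) (mul_nonneg hb (h2nn k))
        · exact hζle k
      obtain ⟨ξ, hξmem, hξeq⟩ := hiv hmem
      exact ⟨ξ, hξmem, hξeq⟩
    choose ξ hξmem hξeq using hex
    refine ⟨fun k => ?_, ξ, fun k => (hξmem k).1, fun k => ?_, ?_⟩
    · simp only [Pi.add_apply, Pi.smul_apply, smul_eq_mul]
      exact add_nonneg (mul_nonneg ha (h1nn k)) (mul_nonneg hb (h2nn k))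
    · simp only [Pi.add_apply, Pi.smul_apply, smul_eq_mul]
      exact hξeq k
    · have hsumM : ∑ k, ξ k ≤ a * ∑ k, ξ₁ k + b * ∑ k, ξ₂ k := by
        rw [Finset.mul_sum, Finset.mul_sum, ← Finset.sum_add_distrib]
        exact Finset.sum_le_sum fun k _ => (hξmem k).2
      have hsnnξ : (0:ℝ) ≤ ∑ k, ξ k := Finset.sum_nonneg fun k _ => (hξmem k).1
      have hx1 : (∑ k, ξ₁ k) ∈ Set.Ici (0:ℝ) :=
        Set.mem_Ici.mpr (Finset.sum_nonneg fun k _ => hξ₁nn k)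
      have hx2 : (∑ k, ξ₂ k) ∈ Set.Ici (0:ℝ) :=
        Set.mem_Ici.mpr (Finset.sum_nonneg fun k _ => hξ₂nn k)
      have hconcS := (hsconc i hi).2 hx1 hx2 ha hb hab
      simp only [smul_eq_mul] at hconcS
      have hs2 : s i (a * ∑ k, ξ₁ k + b * ∑ k, ξ₂ k) ≤ s i (∑ k, ξ k) :=
        hsmono i hi _ _ hsnnξ hsumM
      have hstrict : a * ∑ k, ζ₁ k + b * ∑ k, ζ₂ k <
          a * s i (∑ k, ξ₁ k) + b * s i (∑ k, ξ₂ k) := by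
        rcases eq_or_lt_of_le ha with h | h
        · have hb1 : b = 1 := by linarith
          simp only [← h, hb1, zero_mul, one_mul, zero_add]
          exact hξ₂lt
        · rcases eq_or_lt_of_le hb with h' | h'
          · have ha1 : a = 1 := by linarith
            simp only [← h', ha1, zero_mul, one_mul, add_zero]
            exact hξ₁lt
          · exact add_lt_add ((mul_lt_mul_iff_right₀ h).mpr hξ₁lt)
              ((mul_lt_mul_iff_right₀ h').mpr hξ₂lt)
      calc ∑ k, (a • ζ₁ + b • ζ₂) k = a * ∑ k, ζ₁ k + b * ∑ k, ζ₂ k := by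
            simp [Finset.mul_sum, Finset.sum_add_distrib, smul_eq_mul]
        _ < a * s i (∑ k, ξ₁ k) + b * s i (∑ k, ξ₂ k) := hstrict
        _ ≤ s i (a * ∑ k, ξ₁ k + b * ∑ k, ξ₂ k) := hconcS
        _ ≤ s i (∑ k, ξ k) := hs2
  refine ⟨hcap, ?_⟩
  intro l₁ hl₁ l₂ hl₂ a b ha hb hab
  obtain ⟨h1nn, h1z, h1c⟩ := hl₁
  obtain ⟨h2nn, h2z, h2c⟩ := hl₂
  refine ⟨fun i k => ?_, fun i hi k => ?_, fun i hi => ?_⟩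
  · simp only [Pi.add_apply, Pi.smul_apply, smul_eq_mul]
    exact add_nonneg (mul_nonneg ha (h1nn i k)) (mul_nonneg hb (h2nn i k))
  · simp [Pi.add_apply, Pi.smul_apply, h1z i hi k, h2z i hi k]
  · have hlin : (fun k => transported R (a • l₁ + b • l₂) i k)
        = a • (fun k => transported R l₁ i k) + b • (fun k => transported R l₂ i k) := by
      funext k
      simp only [transported, Pi.add_apply, Pi.smul_apply, smul_eq_mul]
      have hv : (fun j => a * l₁ j k + b * l₂ j k)
          = a • (fun j => l₁ j k) + b • (fun j => l₂ j k) := by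
        funext j; simp [smul_eq_mul]
      rw [hv, Matrix.mulVec_add, Matrix.mulVec_smul, Matrix.mulVec_smul]
      simp [smul_eq_mul]
    rw [hlin]
    exact hcap i hi (h1c i hi) (h2c i hi) ha hb hab
end

section
/- For every convex subset D ⊆ F of the free-flow region and every two solutions x, y : [0,T] → X of the non-FIFO multicommodity dynamical flow network such that x(t), y(t) ∈ D for all t ∈ [0,T], one has ‖x(t) − y(t)‖₁ ≤ ‖x(0) − y(0)‖₁ for all t ∈ [0,T]; i.e., the dynamics are l1-nonexpansive on every convex subset of the free-flow region. -/
open Matrix Finset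

lemma sign_mul_self_eq_abs (a : ℝ) : Real.sign a * a = |a| := by
  rcases lt_trichotomy a 0 with h | h | h
  · rw [Real.sign_of_neg h, abs_of_neg h]; ring
  · simp [h]
  · rw [Real.sign_of_pos h, abs_of_pos h]; ring

lemma abs_sign_le_one (a : ℝ) : |Real.sign a| ≤ 1 := by
  rcases lt_trichotomy a 0 with h | h | h
  · rw [Real.sign_of_neg h]; norm_num
  · simp [h]
  · rw [Real.sign_of_pos h]; norm_num

lemma abs_le_sign_add (Wv e h : ℝ) (hh : 0 ≤ h) :
    |Wv * h + e| ≤ Real.sign Wv * (Wv * h + e) + 2 * |e| := by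
  have h1 : Real.sign Wv * Wv = |Wv| := sign_mul_self_eq_abs Wv
  have h2 : |Real.sign Wv * e| ≤ |e| := by
    rw [abs_mul]
    nlinarith [abs_sign_le_one Wv, abs_nonneg e]
  have h3 : |Wv * h + e| ≤ |Wv| * h + |e| := by
    calc |Wv * h + e| ≤ |Wv * h| + |e| := abs_add_le _ _
      _ = |Wv| * h + |e| := by rw [abs_mul, abs_of_nonneg hh]
  have h4 : Real.sign Wv * (Wv * h + e) = |Wv| * h + Real.sign Wv * e := by
    rw [mul_add, ← mul_assoc, h1]
  have h5 := (abs_le.1 h2).1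
  linarith

section KeyTest
variable {E K : Type*} [Fintype E] [Fintype K] [DecidableEq E]

lemma vectorField_eq_on_freeflow (Ron S : Finset E)
    (d : E → K → ℝ → ℝ) (s : E → ℝ → ℝ) (R : K → Matrix E E ℝ) (lam : E → K → ℝ)
    (hdnn : ∀ i k, ∀ ξ : ℝ, 0 ≤ ξ → 0 ≤ d i k ξ)
    (hRnn : ∀ k i j, 0 ≤ R k i j)
    (hRzero : ∀ k i j, j ∈ Ron ∨ i ∈ S → R k i j = 0)
    (hRrow1 : ∀ k i, i ∉ S → ∑ j, R k i j = 1)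
    (z : E → K → ℝ) (hz : z ∈ FreeFlowRegion Ron d s R) (i : E) (k : K) :
    vectorField S d s R lam z i k
      = lam i k + (∑ j, R k j i * d j k (z j k)) - d i k (z i k) := by
  obtain ⟨hznn, hzff⟩ := hz
  have hscale : ∀ j, flowScale d s R z j = 1 := by
    intro j
    unfold flowScale
    by_cases hID : inflowDemand d R z j = 0
    · simp [hID]
    · rw [if_neg hID]
      have hjR : j ∉ Ron := by
        intro hj
        apply hID
        exact Finset.sum_eq_zero fun l _ => Finset.sum_eq_zero fun h _ => by
          rw [hRzero h l j (Or.inl hj), zero_mul]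
      have hIDnn : 0 ≤ inflowDemand d R z j :=
        Finset.sum_nonneg fun l _ => Finset.sum_nonneg fun h _ =>
          mul_nonneg (hRnn h l j) (hdnn l h _ (hznn l h))
      have hIDpos : 0 < inflowDemand d R z j := lt_of_le_of_ne hIDnn (Ne.symm hID)
      have hlt : inflowDemand d R z j < s j (∑ h, z j h) := by
        have h2 := hzff j hjR
        unfold inflowDemand
        rw [Finset.sum_comm]
        exact h2
      rw [min_eq_left ((one_le_div hIDpos).2 hlt.le)]
  have hout : outFlow S d s R z i k = d i k (z i k) := by
    unfold outFlow interFlow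
    split_ifs with hi
    · rfl
    · simp only [hscale, mul_one, ← Finset.sum_mul, hRrow1 k i hi, one_mul]
  unfold vectorField interFlow
  simp only [hscale, mul_one, hout]

end KeyTest

/-- the non-FIFO multicommodity dynamical flow network is
`l1`-nonexpansive on every convex subset `D` of the free-flow region: any two solutions
remaining in `D` on `[0, T]` satisfy `‖x t − y t‖₁ ≤ ‖x 0 − y 0‖₁`. -/
theorem l1_nonexpansive_on_freeflow
    {E K : Type*} [Fintype E] [Fintype K] [DecidableEq E] [Nonempty E] [Nonempty K]
    (Ron S : Finset E) (hRonNe : Ron.Nonempty) (hSNe : S.Nonempty) (hdisj : Disjoint Ron S)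
    (d : E → K → ℝ → ℝ) (s : E → ℝ → ℝ) (R : K → Matrix E E ℝ)
    (hd0 : ∀ i k, d i k 0 = 0)
    (hdDiff : ∀ i k, ∀ ξ : ℝ, 0 ≤ ξ → DifferentiableAt ℝ (d i k) ξ)
    (hdpos : ∀ i k, ∀ ξ : ℝ, 0 ≤ ξ → 0 < deriv (d i k) ξ)
    (hdnn : ∀ i k, ∀ ξ : ℝ, 0 ≤ ξ → 0 ≤ d i k ξ)
    (hslip : ∀ i, i ∉ Ron → ∃ L : NNReal, LipschitzOnWith L (s i) (Set.Ici 0))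
    (hsmono : ∀ i, i ∉ Ron → ∀ ξ η : ℝ, 0 ≤ η → η ≤ ξ → s i ξ ≤ s i η)
    (hs0 : ∀ i, i ∉ Ron → 0 < s i 0)
    (hsnn : ∀ i, i ∉ Ron → ∀ ξ : ℝ, 0 ≤ ξ → 0 ≤ s i ξ)
    (hRnn : ∀ k i j, 0 ≤ R k i j)
    (hRzero : ∀ k i j, j ∈ Ron ∨ i ∈ S → R k i j = 0)
    (hRrow1 : ∀ k i, i ∉ S → ∑ j, R k i j = 1)
    (hRrow0 : ∀ k i, i ∈ S → ∑ j, R k i j = 0)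
    (hRout : ∀ k (i₀ : E), ∃ (l : ℕ) (p : Fin (l + 1) → E), p 0 = i₀ ∧
      p (Fin.last l) ∈ S ∧ 0 < ∏ h : Fin l, R k (p h.castSucc) (p h.succ))
    (lam : E → K → ℝ) (hlamnn : ∀ i k, 0 ≤ lam i k)
    (hlamsupp : ∀ i, i ∉ Ron → ∀ k, lam i k = 0)
    (D : Set (E → K → ℝ)) (hDconv : Convex ℝ D) (hDF : D ⊆ FreeFlowRegion Ron d s R)
    {T : ℝ} (hT : 0 ≤ T)
    (x y : ℝ → E → K → ℝ)
    (hx : ∀ t ∈ Set.Icc (0 : ℝ) T,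
      HasDerivWithinAt x (fun i k => vectorField S d s R lam (x t) i k) (Set.Icc 0 T) t)
    (hy : ∀ t ∈ Set.Icc (0 : ℝ) T,
      HasDerivWithinAt y (fun i k => vectorField S d s R lam (y t) i k) (Set.Icc 0 T) t)
    (hxD : ∀ t ∈ Set.Icc (0 : ℝ) T, x t ∈ D)
    (hyD : ∀ t ∈ Set.Icc (0 : ℝ) T, y t ∈ D) :
    ∀ t ∈ Set.Icc (0 : ℝ) T,
      ∑ i, ∑ k, |x t i k - y t i k| ≤ ∑ i, ∑ k, |x 0 i k - y 0 i k| := by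
  classical
  -- strict monotonicity of the demand functions on [0, ∞)
  have hmono : ∀ i k, StrictMonoOn (d i k) (Set.Ici 0) := by
    intro i k
    apply strictMonoOn_of_deriv_pos (convex_Ici 0)
    · exact fun ξ hξ => (hdDiff i k ξ hξ).continuousAt.continuousWithinAt
    · intro ξ hξ
      rw [interior_Ici] at hξ
      exact hdpos i k ξ hξ.le
  -- continuity of the candidate Lyapunov function
  have hxc : ContinuousOn x (Set.Icc 0 T) := fun τ hτ => (hx τ hτ).continuousWithinAt
  have hyc : ContinuousOn y (Set.Icc 0 T) := fun τ hτ => (hy τ hτ).continuousWithinAt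
  have hcont : ContinuousOn (fun τ => ∑ i, ∑ k, |x τ i k - y τ i k|) (Set.Icc 0 T) := by
    apply continuousOn_finset_sum
    intro i _
    apply continuousOn_finset_sum
    intro k _
    exact ((((continuous_apply k).comp (continuous_apply i)).comp_continuousOn hxc).sub
      (((continuous_apply k).comp (continuous_apply i)).comp_continuousOn hyc)).abs
  -- the right-derivative condition
  have hf' : ∀ t ∈ Set.Ico (0 : ℝ) T, ∀ r, (0 : ℝ) < r →
      ∃ᶠ z in nhdsWithin t (Set.Ioi t),
        (z - t)⁻¹ * ((∑ i, ∑ k, |x z i k - y z i k|) - ∑ i, ∑ k, |x t i k - y t i k|) < r := by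
    intro t ht r hr
    have ht' : t ∈ Set.Icc 0 T := Set.Ico_subset_Icc_self ht
    have htT : t < T := ht.2
    -- the derivative of each component of x - y
    set W : E → K → ℝ := fun i k =>
      vectorField S d s R lam (x t) i k - vectorField S d s R lam (y t) i k with hWdef
    have hwd : ∀ i k, HasDerivWithinAt (fun τ => x τ i k - y τ i k)
        (W i k) (Set.Icc 0 T) t := by
      intro i k
      exact (((ContinuousLinearMap.proj (R := ℝ) (φ := fun _ : K => ℝ) k).comp
        (ContinuousLinearMap.proj (R := ℝ) (φ := fun _ : E => K → ℝ)
          i)).hasFDerivAt.comp_hasDerivWithinAt t (hx t ht')).sub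
        (((ContinuousLinearMap.proj (R := ℝ) (φ := fun _ : K => ℝ) k).comp
          (ContinuousLinearMap.proj (R := ℝ) (φ := fun _ : E => K → ℝ)
            i)).hasFDerivAt.comp_hasDerivWithinAt t (hy t ht'))
    -- restrict filters to the right
    have hfilter : nhdsWithin t (Set.Ioi t) ≤ nhdsWithin t (Set.Icc 0 T \ {t}) := by
      rw [← nhdsWithin_Ioc_eq_nhdsGT htT]
      exact nhdsWithin_mono _ fun z hz => ⟨⟨ht.1.trans hz.1.le, hz.2⟩, hz.1.ne'⟩
    have hslope : ∀ i k, Filter.Tendsto (slope (fun τ => x τ i k - y τ i k) t)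
        (nhdsWithin t (Set.Ioi t)) (nhds (W i k)) := fun i k =>
      ((hasDerivWithinAt_iff_tendsto_slope.1 (hwd i k)).mono_left hfilter)
    have hwc : ∀ i k, Filter.Tendsto (fun z => x z i k - y z i k)
        (nhdsWithin t (Set.Ioi t)) (nhds (x t i k - y t i k)) := fun i k =>
      ((hwd i k).continuousWithinAt).mono_left
        (hfilter.trans (nhdsWithin_mono _ Set.diff_subset))
    -- the signs
    set σ : E → K → ℝ := fun i k =>
      if x t i k - y t i k = 0 then Real.sign (W i k) else Real.sign (x t i k - y t i k)
      with hσdef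
    have hσ1 : ∀ i k, |σ i k| ≤ 1 := by
      intro i k
      rw [hσdef]
      dsimp only
      split_ifs <;> exact abs_sign_le_one _
    have hxnn := (hDF (hxD t ht')).1
    have hynn := (hDF (hyD t ht')).1
    have hσu : ∀ i k, σ i k * (d i k (x t i k) - d i k (y t i k))
        = |d i k (x t i k) - d i k (y t i k)| := by
      intro i k
      by_cases hc : x t i k - y t i k = 0
      · have hxy : x t i k = y t i k := sub_eq_zero.1 hc
        simp [hxy]
      · rw [hσdef]
        dsimp only
        rw [if_neg hc]
        rcases (sub_ne_zero.1 hc).lt_or_gt with hlt | hgt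
        · have hu : d i k (x t i k) < d i k (y t i k) :=
            hmono i k (hxnn i k) (hynn i k) hlt
          rw [Real.sign_of_neg (sub_neg.2 hlt), abs_of_neg (sub_neg.2 hu)]
          ring
        · have hu : d i k (y t i k) < d i k (x t i k) :=
            hmono i k (hynn i k) (hxnn i k) hgt
          rw [Real.sign_of_pos (sub_pos.2 hgt), abs_of_pos (sub_pos.2 hu)]
          ring
    -- the key dissipativity estimate
    have hWeq : ∀ i k, W i k = (∑ j, R k j i * (d j k (x t j k) - d j k (y t j k)))
        - (d i k (x t i k) - d i k (y t i k)) := by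
      intro i k
      rw [hWdef]
      dsimp only
      rw [vectorField_eq_on_freeflow Ron S d s R lam hdnn hRnn hRzero hRrow1
        (x t) (hDF (hxD t ht')) i k,
        vectorField_eq_on_freeflow Ron S d s R lam hdnn hRnn hRzero hRrow1
        (y t) (hDF (hyD t ht')) i k]
      simp only [mul_sub, Finset.sum_sub_distrib]
      ring
    have hDini : (∑ i, ∑ k, σ i k * W i k) ≤ 0 := by
      have h1 : (∑ i, ∑ k, σ i k * W i k)
          = (∑ i, ∑ k, σ i k * (∑ j, R k j i * (d j k (x t j k) - d j k (y t j k))))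
            - ∑ i, ∑ k, |d i k (x t i k) - d i k (y t i k)| := by
        rw [← Finset.sum_sub_distrib]
        refine Finset.sum_congr rfl fun i _ => ?_
        rw [← Finset.sum_sub_distrib]
        refine Finset.sum_congr rfl fun k _ => ?_
        rw [hWeq i k, mul_sub, hσu i k]
      have h2 : (∑ i, ∑ k, σ i k * (∑ j, R k j i * (d j k (x t j k) - d j k (y t j k))))
          ≤ ∑ i, ∑ k, ∑ j, R k j i * |d j k (x t j k) - d j k (y t j k)| := by
        refine Finset.sum_le_sum fun i _ => Finset.sum_le_sum fun k _ => ?_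
        rw [Finset.mul_sum]
        refine Finset.sum_le_sum fun j _ => ?_
        have he : σ i k * (R k j i * (d j k (x t j k) - d j k (y t j k)))
            = R k j i * (σ i k * (d j k (x t j k) - d j k (y t j k))) := by ring
        rw [he]
        refine mul_le_mul_of_nonneg_left ?_ (hRnn k j i)
        calc σ i k * (d j k (x t j k) - d j k (y t j k))
            ≤ |σ i k * (d j k (x t j k) - d j k (y t j k))| := le_abs_self _
          _ = |σ i k| * |d j k (x t j k) - d j k (y t j k)| := abs_mul _ _
          _ ≤ 1 * |d j k (x t j k) - d j k (y t j k)| :=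
              mul_le_mul_of_nonneg_right (hσ1 i k) (abs_nonneg _)
          _ = |d j k (x t j k) - d j k (y t j k)| := one_mul _
      have h3 : (∑ i, ∑ k, ∑ j, R k j i * |d j k (x t j k) - d j k (y t j k)|)
          ≤ ∑ i, ∑ k, |d i k (x t i k) - d i k (y t i k)| := by
        have e1 : (∑ i, ∑ k, ∑ j, R k j i * |d j k (x t j k) - d j k (y t j k)|)
            = ∑ k, ∑ j, (∑ i, R k j i) * |d j k (x t j k) - d j k (y t j k)| := by
          rw [Finset.sum_comm]
          refine Finset.sum_congr rfl fun k _ => ?_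
          rw [Finset.sum_comm]
          exact Finset.sum_congr rfl fun j _ => by rw [Finset.sum_mul]
        rw [e1]
        have e2 : (∑ i, ∑ k, |d i k (x t i k) - d i k (y t i k)|)
            = ∑ k, ∑ j, |d j k (x t j k) - d j k (y t j k)| := Finset.sum_comm
        rw [e2]
        refine Finset.sum_le_sum fun k _ => Finset.sum_le_sum fun j _ => ?_
        have hrow : (∑ i, R k j i) ≤ 1 := by
          by_cases hj : j ∈ S
          · rw [hRrow0 k j hj]; norm_num
          · rw [hRrow1 k j hj]
        calc (∑ i, R k j i) * |d j k (x t j k) - d j k (y t j k)|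
            ≤ 1 * |d j k (x t j k) - d j k (y t j k)| :=
              mul_le_mul_of_nonneg_right hrow (abs_nonneg _)
          _ = _ := one_mul _
      rw [h1]
      linarith [h2.trans h3]
    -- componentwise eventual slope bounds
    have hcomp : ∀ i k, ∀ᶠ z in nhdsWithin t (Set.Ioi t),
        (z - t)⁻¹ * (|x z i k - y z i k| - |x t i k - y t i k|)
          ≤ σ i k * slope (fun τ => x τ i k - y τ i k) t z
            + 2 * |slope (fun τ => x τ i k - y τ i k) t z - W i k| := by
      intro i k
      by_cases hc : x t i k - y t i k = 0
      · filter_upwards [self_mem_nhdsWithin] with z hz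
        have hzt : 0 < z - t := sub_pos.2 hz
        have hσeq : σ i k = Real.sign (W i k) := by rw [hσdef]; dsimp only; rw [if_pos hc]
        have hxy : x t i k = y t i k := sub_eq_zero.1 hc
        set wz := x z i k - y z i k with hwz
        have hsl : slope (fun τ => x τ i k - y τ i k) t z = wz / (z - t) := by
          rw [slope_def_field, hc, sub_zero]
        have hkey : |wz| ≤ σ i k * wz + 2 * |wz - W i k * (z - t)| := by
          have h0 := abs_le_sign_add (W i k) (wz - W i k * (z - t)) (z - t) hzt.le
          have he : W i k * (z - t) + (wz - W i k * (z - t)) = wz := by ring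
          rw [he] at h0
          rw [hσeq]
          exact h0
        have hrw : slope (fun τ => x τ i k - y τ i k) t z - W i k
            = (wz - W i k * (z - t)) / (z - t) := by
          rw [hsl]; field_simp
        rw [hc, abs_zero, sub_zero, hrw, hsl, abs_div, abs_of_pos hzt]
        have hmul := mul_le_mul_of_nonneg_left hkey (inv_nonneg.2 hzt.le)
        have hring : (z - t)⁻¹ * (σ i k * wz + 2 * |wz - W i k * (z - t)|)
            = σ i k * (wz / (z - t)) + 2 * (|wz - W i k * (z - t)| / (z - t)) := by
          field_simp
        rw [hring] at hmul
        linarith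
      · rcases (sub_ne_zero.1 hc).lt_or_gt with hlt | hgt
        · -- x t i k < y t i k : eventually negative
          have hev : ∀ᶠ z in nhdsWithin t (Set.Ioi t), x z i k - y z i k < 0 :=
            (hwc i k).eventually_lt_const (sub_neg.2 hlt)
          filter_upwards [hev, self_mem_nhdsWithin] with z hz1 hz2
          have hzt : 0 < z - t := sub_pos.2 hz2
          have hσeq : σ i k = -1 := by
            rw [hσdef]; dsimp only; rw [if_neg hc, Real.sign_of_neg (sub_neg.2 hlt)]
          have h1 : |x z i k - y z i k| - |x t i k - y t i k|
              = σ i k * ((x z i k - y z i k) - (x t i k - y t i k)) := by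
            rw [abs_of_neg hz1, abs_of_neg (sub_neg.2 hlt), hσeq]; ring
          rw [h1, slope_def_field]
          have h2 : (z - t)⁻¹ * (σ i k * ((x z i k - y z i k) - (x t i k - y t i k)))
              = σ i k * (((x z i k - y z i k) - (x t i k - y t i k)) / (z - t)) := by
            field_simp
          rw [h2]
          exact le_add_of_nonneg_right (by positivity)
        · have hev : ∀ᶠ z in nhdsWithin t (Set.Ioi t), 0 < x z i k - y z i k :=
            (hwc i k).eventually_const_lt (sub_pos.2 hgt)
          filter_upwards [hev, self_mem_nhdsWithin] with z hz1 hz2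
          have hzt : 0 < z - t := sub_pos.2 hz2
          have hσeq : σ i k = 1 := by
            rw [hσdef]; dsimp only; rw [if_neg hc, Real.sign_of_pos (sub_pos.2 hgt)]
          have h1 : |x z i k - y z i k| - |x t i k - y t i k|
              = σ i k * ((x z i k - y z i k) - (x t i k - y t i k)) := by
            rw [abs_of_pos hz1, abs_of_pos (sub_pos.2 hgt), hσeq]; ring
          rw [h1, slope_def_field]
          have h2 : (z - t)⁻¹ * (σ i k * ((x z i k - y z i k) - (x t i k - y t i k)))
              = σ i k * (((x z i k - y z i k) - (x t i k - y t i k)) / (z - t)) := by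
            field_simp
          rw [h2]
          exact le_add_of_nonneg_right (by positivity)
    -- the comparison function tends to the Dini bound
    have hAtend : Filter.Tendsto (fun z => ∑ i, ∑ k,
        (σ i k * slope (fun τ => x τ i k - y τ i k) t z
          + 2 * |slope (fun τ => x τ i k - y τ i k) t z - W i k|))
        (nhdsWithin t (Set.Ioi t)) (nhds (∑ i, ∑ k, σ i k * W i k)) := by
      have : Filter.Tendsto (fun z => ∑ i, ∑ k,
          (σ i k * slope (fun τ => x τ i k - y τ i k) t z
            + 2 * |slope (fun τ => x τ i k - y τ i k) t z - W i k|))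
          (nhdsWithin t (Set.Ioi t))
          (nhds (∑ i, ∑ k, (σ i k * W i k + 2 * |W i k - W i k|))) := by
        refine tendsto_finset_sum _ fun i _ => tendsto_finset_sum _ fun k _ => ?_
        exact (((hslope i k).const_mul (σ i k)).add
          ((((hslope i k).sub_const (W i k)).abs).const_mul 2))
      simpa using this
    have hAlt : ∀ᶠ z in nhdsWithin t (Set.Ioi t), (∑ i, ∑ k,
        (σ i k * slope (fun τ => x τ i k - y τ i k) t z
          + 2 * |slope (fun τ => x τ i k - y τ i k) t z - W i k|)) < r :=
      hAtend.eventually_lt_const (lt_of_le_of_lt hDini hr)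
    have hall : ∀ᶠ z in nhdsWithin t (Set.Ioi t), ∀ i, ∀ k,
        (z - t)⁻¹ * (|x z i k - y z i k| - |x t i k - y t i k|)
          ≤ σ i k * slope (fun τ => x τ i k - y τ i k) t z
            + 2 * |slope (fun τ => x τ i k - y τ i k) t z - W i k| := by
      rw [Filter.eventually_all]
      intro i
      rw [Filter.eventually_all]
      intro k
      exact hcomp i k
    have hfin : ∀ᶠ z in nhdsWithin t (Set.Ioi t),
        (z - t)⁻¹ * ((∑ i, ∑ k, |x z i k - y z i k|) - ∑ i, ∑ k, |x t i k - y t i k|) < r := by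
      filter_upwards [hall, hAlt] with z h1 h2
      have e1 : (z - t)⁻¹ * ((∑ i, ∑ k, |x z i k - y z i k|) - ∑ i, ∑ k, |x t i k - y t i k|)
          = ∑ i, ∑ k, (z - t)⁻¹ * (|x z i k - y z i k| - |x t i k - y t i k|) := by
        rw [← Finset.sum_sub_distrib, Finset.mul_sum]
        refine Finset.sum_congr rfl fun i _ => ?_
        rw [← Finset.sum_sub_distrib, Finset.mul_sum]
      rw [e1]
      calc (∑ i, ∑ k, (z - t)⁻¹ * (|x z i k - y z i k| - |x t i k - y t i k|))
          ≤ ∑ i, ∑ k, (σ i k * slope (fun τ => x τ i k - y τ i k) t z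
            + 2 * |slope (fun τ => x τ i k - y τ i k) t z - W i k|) :=
            Finset.sum_le_sum fun i _ => Finset.sum_le_sum fun k _ => h1 i k
        _ < r := h2
    exact hfin.frequently
  -- apply Grönwall
  intro t ht
  have main := le_gronwallBound_of_liminf_deriv_right_le
    (f := fun τ => ∑ i, ∑ k, |x τ i k - y τ i k|) (f' := fun _ => (0 : ℝ))
    (δ := ∑ i, ∑ k, |x 0 i k - y 0 i k|) (K := 0) (ε := 0) (a := 0) (b := T)
    hcont (fun τ hτ r hr => hf' τ hτ r hr) le_rfl
    (fun τ _ => by norm_num) t ht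
  simpa [gronwallBound] using main
end

section
/- In the single-commodity case (|K| = 1), the non-FIFO dynamical flow network is l1-nonexpansive on the whole state space X = ℝ≥0^E: for every two solutions x, y : [0,T] → X of the dynamics, one has ‖x(t) − y(t)‖₁ ≤ ‖x(0) − y(0)‖₁ for all t ∈ [0,T]. -/
open Matrix Finset

section SingleCommodity

variable {E : Type*} [Fintype E] [DecidableEq E]

/-- Total demand of flow directed into cell `j` (single commodity). -/
noncomputable def scInflowDemand (d : E → ℝ → ℝ) (R : Matrix E E ℝ)
    (x : E → ℝ) (j : E) : ℝ :=
  ∑ l, R l j * d l (x l)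

/-- The non-FIFO scaling factor `min {1, s_j(x_j) / Σ_l R_lj d_l(x_l)}`, taken equal to
`1` when the denominator vanishes (single commodity). -/
noncomputable def scFlowScale (d : E → ℝ → ℝ) (s : E → ℝ → ℝ) (R : Matrix E E ℝ)
    (x : E → ℝ) (j : E) : ℝ :=
  if scInflowDemand d R x j = 0 then 1
  else min 1 (s j (x j) / scInflowDemand d R x j)

/-- The non-FIFO inter-cell flow `f_ij(x)` (single commodity). -/
noncomputable def scInterFlow (d : E → ℝ → ℝ) (s : E → ℝ → ℝ) (R : Matrix E E ℝ)
    (x : E → ℝ) (i j : E) : ℝ :=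
  R i j * d i (x i) * scFlowScale d s R x j

/-- Total outflow `z_i(x)` from cell `i` (single commodity). -/
noncomputable def scOutFlow (S : Finset E) (d : E → ℝ → ℝ) (s : E → ℝ → ℝ)
    (R : Matrix E E ℝ) (x : E → ℝ) (i : E) : ℝ :=
  if i ∈ S then d i (x i) else ∑ j, scInterFlow d s R x i j

/-- The right-hand side of the single-commodity non-FIFO dynamics. -/
noncomputable def scVectorField (S : Finset E) (d : E → ℝ → ℝ) (s : E → ℝ → ℝ)
    (R : Matrix E E ℝ) (lam : E → ℝ) (x : E → ℝ) (i : E) : ℝ :=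
  lam i + (∑ j, scInterFlow d s R x j i) - scOutFlow S d s R x i

/-- The free-flow region (single commodity). -/
def scFreeFlowRegion (Ron : Finset E) (d : E → ℝ → ℝ) (s : E → ℝ → ℝ)
    (R : Matrix E E ℝ) : Set (E → ℝ) :=
  {x | (∀ i, 0 ≤ x i) ∧ ∀ i, i ∉ Ron → (∑ j, R j i * d j (x j)) < s i (x i)}

/-- The capacity region of a cell (single commodity). -/
def scCapacityRegion (dI sI : ℝ → ℝ) : Set ℝ :=
  {ζ | 0 ≤ ζ ∧ ∃ ξ : ℝ, 0 ≤ ξ ∧ dI ξ = ζ ∧ ζ < sI ξ}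

/-- The transported inflow `((I − Rᵀ)⁻¹ λ)_i` (single commodity). -/
noncomputable def scTransported (R : Matrix E E ℝ) (lam : E → ℝ) (i : E) : ℝ :=
  ((1 - Rᵀ)⁻¹ *ᵥ lam) i

/-- The stability region `Λ` (single commodity). -/
def scStabilityRegion (Ron : Finset E) (d : E → ℝ → ℝ) (s : E → ℝ → ℝ)
    (R : Matrix E E ℝ) : Set (E → ℝ) :=
  {lam | (∀ i, 0 ≤ lam i) ∧ (∀ i, i ∉ Ron → lam i = 0) ∧
    ∀ i, i ∉ Ron → scTransported R lam i ∈ scCapacityRegion (d i) (s i)}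

end SingleCommodity

section AuxProof

set_option linter.unusedSectionVars false
variable {E : Type*} [Fintype E] [DecidableEq E]
variable {Ron S : Finset E} {d s : E → ℝ → ℝ} {R : Matrix E E ℝ} {lam : E → ℝ}

private lemma sc_demand_nonneg (hRnn : ∀ i j, 0 ≤ R i j)
    (hdnn : ∀ i, ∀ ξ : ℝ, 0 ≤ ξ → 0 ≤ d i ξ)
    {x : E → ℝ} (hx : ∀ k, 0 ≤ x k) (j : E) :
    0 ≤ scInflowDemand d R x j :=
  Finset.sum_nonneg fun l _ => mul_nonneg (hRnn l j) (hdnn l _ (hx l))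

private lemma sc_demand_mono (hRnn : ∀ i j, 0 ≤ R i j)
    (hdmono : ∀ l : E, ∀ p q : ℝ, 0 ≤ p → p ≤ q → d l p ≤ d l q)
    {a b : E → ℝ} (ha : ∀ k, 0 ≤ a k) (hab : ∀ k, a k ≤ b k) (j : E) :
    scInflowDemand d R a j ≤ scInflowDemand d R b j :=
  Finset.sum_le_sum fun l _ =>
    mul_le_mul_of_nonneg_left (hdmono l _ _ (ha l) (hab l)) (hRnn l j)

private lemma sc_scale_antitone (hRnn : ∀ i j, 0 ≤ R i j)
    (hdnn : ∀ i, ∀ ξ : ℝ, 0 ≤ ξ → 0 ≤ d i ξ)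
    (hdmono : ∀ l : E, ∀ p q : ℝ, 0 ≤ p → p ≤ q → d l p ≤ d l q)
    (hRron : ∀ i j, j ∈ Ron → R i j = 0)
    (hsmono : ∀ i, i ∉ Ron → ∀ ξ η : ℝ, 0 ≤ η → η ≤ ξ → s i ξ ≤ s i η)
    (hsnn : ∀ i, i ∉ Ron → ∀ ξ : ℝ, 0 ≤ ξ → 0 ≤ s i ξ)
    {a b : E → ℝ} (ha : ∀ k, 0 ≤ a k) (hab : ∀ k, a k ≤ b k) (j : E) :
    scFlowScale d s R b j ≤ scFlowScale d s R a j := by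
  by_cases hj : j ∈ Ron
  · have hDa : scInflowDemand d R a j = 0 := by
      simp [scInflowDemand, fun l => hRron l j hj]
    have hDb : scInflowDemand d R b j = 0 := by
      simp [scInflowDemand, fun l => hRron l j hj]
    simp [scFlowScale, hDa, hDb]
  · have hb : ∀ k, 0 ≤ b k := fun k => (ha k).trans (hab k)
    have hDle : scInflowDemand d R a j ≤ scInflowDemand d R b j :=
      sc_demand_mono hRnn hdmono ha hab j
    by_cases h0 : scInflowDemand d R a j = 0
    · have h1 : scFlowScale d s R a j = 1 := by simp [scFlowScale, h0]
      rw [h1, scFlowScale]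
      split
      · exact le_rfl
      · exact min_le_left _ _
    · have hDa : 0 < scInflowDemand d R a j :=
        lt_of_le_of_ne (sc_demand_nonneg hRnn hdnn ha j) (Ne.symm h0)
      have hDb : 0 < scInflowDemand d R b j := lt_of_lt_of_le hDa hDle
      simp only [scFlowScale]
      rw [if_neg h0, if_neg (ne_of_gt hDb)]
      refine min_le_min le_rfl ?_
      exact div_le_div₀ (hsnn j hj _ (ha j))
        (hsmono j hj (b j) (a j) (ha j) (hab j)) hDa hDle

private lemma sc_inflow_eq_min (hRnn : ∀ i j, 0 ≤ R i j)
    (hdnn : ∀ i, ∀ ξ : ℝ, 0 ≤ ξ → 0 ≤ d i ξ)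
    {x : E → ℝ} (hx : ∀ k, 0 ≤ x k) (j : E) (hs0 : 0 ≤ s j (x j)) :
    ∑ l, scInterFlow d s R x l j = min (scInflowDemand d R x j) (s j (x j)) := by
  have hsum : ∑ l, scInterFlow d s R x l j
      = scInflowDemand d R x j * scFlowScale d s R x j := by
    rw [scInflowDemand, Finset.sum_mul]
    rfl
  by_cases h0 : scInflowDemand d R x j = 0
  · rw [hsum, h0, zero_mul, min_eq_left hs0]
  · have hD : 0 < scInflowDemand d R x j :=
      lt_of_le_of_ne (sc_demand_nonneg hRnn hdnn hx j) (Ne.symm h0)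
    rw [hsum, scFlowScale, if_neg h0, mul_min_of_nonneg _ _ hD.le, mul_one,
      mul_div_cancel₀ _ h0]


private lemma scF_mono (hRnn : ∀ i j, 0 ≤ R i j)
    (hRzero : ∀ i j, j ∈ Ron ∨ i ∈ S → R i j = 0)
    (hdmono : ∀ l : E, ∀ p q : ℝ, 0 ≤ p → p ≤ q → d l p ≤ d l q)
    (hdnn : ∀ i, ∀ ξ : ℝ, 0 ≤ ξ → 0 ≤ d i ξ)
    (hsmono : ∀ i, i ∉ Ron → ∀ ξ η : ℝ, 0 ≤ η → η ≤ ξ → s i ξ ≤ s i η)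
    (hsnn : ∀ i, i ∉ Ron → ∀ ξ : ℝ, 0 ≤ ξ → 0 ≤ s i ξ)
    {a b : E → ℝ} (ha : ∀ k, 0 ≤ a k) (hab : ∀ k, a k ≤ b k) {i : E} (hi : a i = b i) :
    scVectorField S d s R lam a i ≤ scVectorField S d s R lam b i := by
  have hb : ∀ k, 0 ≤ b k := fun k => (ha k).trans (hab k)
  have hRron : ∀ l j, j ∈ Ron → R l j = 0 := fun l j hj => hRzero l j (Or.inl hj)
  have hin : (∑ j, scInterFlow d s R a j i) ≤ ∑ j, scInterFlow d s R b j i := by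
    by_cases hiR : i ∈ Ron
    · have hcol : ∀ l, R l i = 0 := fun l => hRron l i hiR
      simp [scInterFlow, hcol]
    · rw [sc_inflow_eq_min hRnn hdnn ha i (hsnn i hiR _ (ha i)),
        sc_inflow_eq_min hRnn hdnn hb i (hsnn i hiR _ (hb i)), hi]
      exact min_le_min (sc_demand_mono hRnn hdmono ha hab i) le_rfl
  have hout : scOutFlow S d s R b i ≤ scOutFlow S d s R a i := by
    unfold scOutFlow
    by_cases hiS : i ∈ S
    · simp [hiS, hi]
    · simp only [if_neg hiS]
      refine Finset.sum_le_sum fun j _ => ?_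
      unfold scInterFlow
      rw [← hi]
      exact mul_le_mul_of_nonneg_left
        (sc_scale_antitone hRnn hdnn hdmono hRron hsmono hsnn ha hab j)
        (mul_nonneg (hRnn i j) (hdnn i _ (ha i)))
  unfold scVectorField
  linarith

private lemma scF_sum (hRS : ∀ i j, i ∈ S → R i j = 0) (x : E → ℝ) :
    ∑ i, scVectorField S d s R lam x i
      = (∑ i, lam i) - ∑ i, (if i ∈ S then d i (x i) else 0) := by
  have hz : ∀ i, scOutFlow S d s R x i
      = (∑ j, scInterFlow d s R x i j) + (if i ∈ S then d i (x i) else 0) := by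
    intro i
    by_cases hiS : i ∈ S
    · have h0 : ∀ j, scInterFlow d s R x i j = 0 := fun j => by
        simp [scInterFlow, hRS i j hiS]
      simp [scOutFlow, hiS, h0]
    · simp [scOutFlow, hiS]
  have hcomm : ∑ i, ∑ j, scInterFlow d s R x j i
      = ∑ i, ∑ j, scInterFlow d s R x i j := Finset.sum_comm
  simp only [scVectorField, hz]
  rw [Finset.sum_sub_distrib, Finset.sum_add_distrib, Finset.sum_add_distrib]
  rw [hcomm]
  ring

private lemma sc_signed_sum_le (hRnn : ∀ i j, 0 ≤ R i j)
    (hRzero : ∀ i j, j ∈ Ron ∨ i ∈ S → R i j = 0)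
    (hdmono : ∀ l : E, ∀ p q : ℝ, 0 ≤ p → p ≤ q → d l p ≤ d l q)
    (hdnn : ∀ i, ∀ ξ : ℝ, 0 ≤ ξ → 0 ≤ d i ξ)
    (hsmono : ∀ i, i ∉ Ron → ∀ ξ η : ℝ, 0 ≤ η → η ≤ ξ → s i ξ ≤ s i η)
    (hsnn : ∀ i, i ∉ Ron → ∀ ξ : ℝ, 0 ≤ ξ → 0 ≤ s i ξ)
    {a b : E → ℝ} (ha : ∀ k, 0 ≤ a k) (hb : ∀ k, 0 ≤ b k) :
    ∑ i, (if a i = b i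
        then |scVectorField S d s R lam a i - scVectorField S d s R lam b i|
        else if b i < a i
          then scVectorField S d s R lam a i - scVectorField S d s R lam b i
          else scVectorField S d s R lam b i - scVectorField S d s R lam a i)
      ≤ 0 := by
  set m : E → ℝ := fun k => min (a k) (b k) with hm
  set M : E → ℝ := fun k => max (a k) (b k) with hM
  have hm0 : ∀ k, 0 ≤ m k := fun k => le_min (ha k) (hb k)
  have hmM : ∀ k, m k ≤ M k := fun k => min_le_max
  have key : ∀ i, (if a i = b i
        then |scVectorField S d s R lam a i - scVectorField S d s R lam b i|
        else if b i < a i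
          then scVectorField S d s R lam a i - scVectorField S d s R lam b i
          else scVectorField S d s R lam b i - scVectorField S d s R lam a i)
      ≤ scVectorField S d s R lam M i - scVectorField S d s R lam m i := by
    intro i
    have haM : ∀ (h : b i ≤ a i), scVectorField S d s R lam a i ≤ scVectorField S d s R lam M i :=
      fun h => scF_mono hRnn hRzero hdmono hdnn hsmono hsnn ha
        (fun k => le_max_left _ _) (max_eq_left h).symm
    have hbM : ∀ (h : a i ≤ b i), scVectorField S d s R lam b i ≤ scVectorField S d s R lam M i :=
      fun h => scF_mono hRnn hRzero hdmono hdnn hsmono hsnn hb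
        (fun k => le_max_right _ _) (max_eq_right h).symm
    have hmb : ∀ (h : b i ≤ a i), scVectorField S d s R lam m i ≤ scVectorField S d s R lam b i :=
      fun h => scF_mono hRnn hRzero hdmono hdnn hsmono hsnn hm0
        (fun k => min_le_right _ _) (min_eq_right h)
    have hma : ∀ (h : a i ≤ b i), scVectorField S d s R lam m i ≤ scVectorField S d s R lam a i :=
      fun h => scF_mono hRnn hRzero hdmono hdnn hsmono hsnn hm0
        (fun k => min_le_left _ _) (min_eq_left h)
    rcases lt_trichotomy (a i) (b i) with hlt | heq | hgt
    · rw [if_neg (ne_of_lt hlt), if_neg (not_lt_of_gt hlt)]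
      linarith [hbM hlt.le, hma hlt.le]
    · rw [if_pos heq]
      rw [abs_sub_le_iff]
      constructor
      · linarith [haM heq.ge, hmb heq.ge]
      · linarith [hbM heq.le, hma heq.le]
    · rw [if_neg (ne_of_gt hgt), if_pos hgt]
      linarith [haM hgt.le, hmb hgt.le]
  have hRS : ∀ i j, i ∈ S → R i j = 0 := fun i j h => hRzero i j (Or.inr h)
  calc ∑ i, (if a i = b i
        then |scVectorField S d s R lam a i - scVectorField S d s R lam b i|
        else if b i < a i
          then scVectorField S d s R lam a i - scVectorField S d s R lam b i
          else scVectorField S d s R lam b i - scVectorField S d s R lam a i)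
      ≤ ∑ i, (scVectorField S d s R lam M i - scVectorField S d s R lam m i) :=
        Finset.sum_le_sum fun i _ => key i
    _ = (∑ i, (if i ∈ S then d i (m i) else 0)) - ∑ i, (if i ∈ S then d i (M i) else 0) := by
        rw [Finset.sum_sub_distrib, scF_sum hRS, scF_sum hRS]
        ring
    _ ≤ 0 := by
        rw [sub_nonpos]
        refine Finset.sum_le_sum fun i _ => ?_
        by_cases hiS : i ∈ S
        · simpa [hiS] using hdmono i _ _ (hm0 i) (hmM i)
        · simp [hiS]

end AuxProof

set_option maxHeartbeats 1000000

/-- in the single-commodity case, the non-FIFO dynamical flow network is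
`l1`-nonexpansive on the whole state space `X = ℝ≥0^E`: any two solutions of the
dynamics on `[0, T]` (with values in `X`) satisfy `‖x t − y t‖₁ ≤ ‖x 0 − y 0‖₁`. -/
theorem single_commodity_l1_nonexpansive
    {E : Type*} [Fintype E] [DecidableEq E] [Nonempty E]
    (Ron S : Finset E) (hRonNe : Ron.Nonempty) (hSNe : S.Nonempty) (hdisj : Disjoint Ron S)
    (d : E → ℝ → ℝ) (s : E → ℝ → ℝ) (R : Matrix E E ℝ)
    (hd0 : ∀ i, d i 0 = 0)
    (hdDiff : ∀ i, ∀ ξ : ℝ, 0 ≤ ξ → DifferentiableAt ℝ (d i) ξ)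
    (hdpos : ∀ i, ∀ ξ : ℝ, 0 ≤ ξ → 0 < deriv (d i) ξ)
    (hdnn : ∀ i, ∀ ξ : ℝ, 0 ≤ ξ → 0 ≤ d i ξ)
    (hslip : ∀ i, i ∉ Ron → ∃ L : NNReal, LipschitzOnWith L (s i) (Set.Ici 0))
    (hsmono : ∀ i, i ∉ Ron → ∀ ξ η : ℝ, 0 ≤ η → η ≤ ξ → s i ξ ≤ s i η)
    (hs0 : ∀ i, i ∉ Ron → 0 < s i 0)
    (hsnn : ∀ i, i ∉ Ron → ∀ ξ : ℝ, 0 ≤ ξ → 0 ≤ s i ξ)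
    (hRnn : ∀ i j, 0 ≤ R i j)
    (hRzero : ∀ i j, j ∈ Ron ∨ i ∈ S → R i j = 0)
    (hRrow1 : ∀ i, i ∉ S → ∑ j, R i j = 1)
    (hRrow0 : ∀ i, i ∈ S → ∑ j, R i j = 0)
    (hRout : ∀ i₀ : E, ∃ (l : ℕ) (p : Fin (l + 1) → E), p 0 = i₀ ∧
      p (Fin.last l) ∈ S ∧ 0 < ∏ h : Fin l, R (p h.castSucc) (p h.succ))
    (lam : E → ℝ) (hlamnn : ∀ i, 0 ≤ lam i)
    (hlamsupp : ∀ i, i ∉ Ron → lam i = 0)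
    {T : ℝ} (hT : 0 ≤ T)
    (x y : ℝ → E → ℝ)
    (hx : ∀ t ∈ Set.Icc (0 : ℝ) T,
      HasDerivWithinAt x (fun i => scVectorField S d s R lam (x t) i) (Set.Icc 0 T) t)
    (hy : ∀ t ∈ Set.Icc (0 : ℝ) T,
      HasDerivWithinAt y (fun i => scVectorField S d s R lam (y t) i) (Set.Icc 0 T) t)
    (hxX : ∀ t ∈ Set.Icc (0 : ℝ) T, ∀ i, 0 ≤ x t i)
    (hyX : ∀ t ∈ Set.Icc (0 : ℝ) T, ∀ i, 0 ≤ y t i) :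
    ∀ t ∈ Set.Icc (0 : ℝ) T, ∑ i, |x t i - y t i| ≤ ∑ i, |x 0 i - y 0 i| := by
  classical
  have hdmono : ∀ l : E, ∀ p q : ℝ, 0 ≤ p → p ≤ q → d l p ≤ d l q := by
    intro l p q hp hpq
    have hsm : StrictMonoOn (d l) (Set.Ici 0) := by
      refine strictMonoOn_of_deriv_pos (convex_Ici 0) ?_ ?_
      · intro ξ hξ; exact (hdDiff l ξ hξ).continuousAt.continuousWithinAt
      · intro ξ hξ
        exact hdpos l ξ (le_of_lt (by simpa using hξ))
    rcases eq_or_lt_of_le hpq with rfl | h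
    · exact le_rfl
    · exact (hsm hp (hp.trans hpq) h).le
  set V : ℝ → ℝ := fun τ => ∑ i, |x τ i - y τ i| with hVdef
  have hderiv : ∀ i, ∀ t ∈ Set.Icc (0:ℝ) T,
      HasDerivWithinAt (fun τ => x τ i - y τ i)
        (scVectorField S d s R lam (x t) i - scVectorField S d s R lam (y t) i)
        (Set.Icc 0 T) t := by
    intro i t ht
    exact ((hasDerivWithinAt_pi.1 (hx t ht)) i).sub ((hasDerivWithinAt_pi.1 (hy t ht)) i)
  have hVcont : ContinuousOn V (Set.Icc 0 T) := by
    refine continuousOn_finset_sum _ fun i _ => ?_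
    intro t ht
    exact ((hderiv i t ht).continuousWithinAt).abs
  have bound : ∀ τ ∈ Set.Ico (0:ℝ) T, ∀ r, (0:ℝ) < r →
      ∃ᶠ z in nhdsWithin τ (Set.Ioi τ), slope V τ z < r := by
    intro τ hτ r hr
    have hτIcc : τ ∈ Set.Icc (0:ℝ) T := Set.mem_Icc_of_Ico hτ
    set c : E → ℝ := fun i =>
      if x τ i = y τ i
        then |scVectorField S d s R lam (x τ) i - scVectorField S d s R lam (y τ) i|
        else if y τ i < x τ i
          then scVectorField S d s R lam (x τ) i - scVectorField S d s R lam (y τ) i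
          else scVectorField S d s R lam (y τ) i - scVectorField S d s R lam (x τ) i
      with hcdef
    have hcle : ∑ i, c i ≤ 0 :=
      sc_signed_sum_le hRnn hRzero hdmono hdnn hsmono hsnn (hxX τ hτIcc) (hyX τ hτIcc)
    have hIocsub : nhdsWithin τ (Set.Ioi τ) ≤ nhdsWithin τ (Set.Icc (0:ℝ) T) := by
      rw [← nhdsWithin_Ioc_eq_nhdsGT hτ.2]
      exact nhdsWithin_mono τ (fun z hz => ⟨hτ.1.trans hz.1.le, hz.2⟩)
    have hslopei : ∀ i, Filter.Tendsto (slope (fun σ => |x σ i - y σ i|) τ)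
        (nhdsWithin τ (Set.Ioi τ)) (nhds (c i)) := by
      intro i
      have hsub : Set.Ioc τ T ⊆ (Set.Icc (0:ℝ) T) \ {τ} := by
        intro z hz
        exact ⟨⟨hτ.1.trans hz.1.le, hz.2⟩, hz.1.ne'⟩
      have hsl : Filter.Tendsto (slope (fun σ => x σ i - y σ i) τ) (nhdsWithin τ (Set.Ioi τ))
          (nhds (scVectorField S d s R lam (x τ) i - scVectorField S d s R lam (y τ) i)) := by
        have h1 := hasDerivWithinAt_iff_tendsto_slope.1 (hderiv i τ hτIcc)
        have h2 := h1.mono_left (nhdsWithin_mono τ hsub)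
        rwa [nhdsWithin_Ioc_eq_nhdsGT hτ.2] at h2
      have hwc : Filter.Tendsto (fun σ => x σ i - y σ i) (nhdsWithin τ (Set.Ioi τ))
          (nhds (x τ i - y τ i)) :=
        Filter.Tendsto.mono_left ((hderiv i τ hτIcc).continuousWithinAt) hIocsub
      rcases lt_trichotomy (x τ i) (y τ i) with hlt | heq | hgt
      · have hneg : x τ i - y τ i < 0 := sub_neg.2 hlt
        have hci : c i = -(scVectorField S d s R lam (x τ) i
            - scVectorField S d s R lam (y τ) i) := by
          rw [hcdef]
          simp only [if_neg (ne_of_lt hlt), if_neg (not_lt_of_gt hlt)]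
          ring
        have hev : slope (fun σ => x σ i - y σ i) τ =ᶠ[nhdsWithin τ (Set.Ioi τ)]
            fun z => -slope (fun σ => |x σ i - y σ i|) τ z := by
          filter_upwards [hwc.eventually (gt_mem_nhds hneg)] with z hz
          simp only [slope_def_field]
          rw [abs_of_neg hz, abs_of_neg hneg]
          ring
        have := (Filter.Tendsto.congr' hev hsl).neg
        rw [hci]
        simpa using this
      · have hwτ : x τ i - y τ i = 0 := sub_eq_zero.2 heq
        have hci : c i = |scVectorField S d s R lam (x τ) i
            - scVectorField S d s R lam (y τ) i| := by
          rw [hcdef]; simp only [if_pos heq]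
        have hev : (fun z => |slope (fun σ => x σ i - y σ i) τ z|) =ᶠ[nhdsWithin τ (Set.Ioi τ)]
            slope (fun σ => |x σ i - y σ i|) τ := by
          filter_upwards [self_mem_nhdsWithin] with z hz
          have hzτ : 0 < z - τ := sub_pos.2 hz
          simp only [slope_def_field]
          rw [hwτ, abs_zero, sub_zero, sub_zero, abs_div, abs_of_pos hzτ]
        rw [hci]
        exact Filter.Tendsto.congr' hev hsl.abs
      · have hpos : 0 < x τ i - y τ i := sub_pos.2 hgt
        have hci : c i = scVectorField S d s R lam (x τ) i
            - scVectorField S d s R lam (y τ) i := by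
          rw [hcdef]; simp only [if_neg (ne_of_gt hgt), if_pos hgt]
        have hev : slope (fun σ => x σ i - y σ i) τ =ᶠ[nhdsWithin τ (Set.Ioi τ)]
            slope (fun σ => |x σ i - y σ i|) τ := by
          filter_upwards [hwc.eventually (lt_mem_nhds hpos)] with z hz
          simp only [slope_def_field]
          rw [abs_of_pos hz, abs_of_pos hpos]
        rw [hci]
        exact Filter.Tendsto.congr' hev hsl
    have hVslope : ∀ z, slope V τ z = ∑ i, slope (fun σ => |x σ i - y σ i|) τ z := by
      intro z
      simp only [slope_def_field, hVdef]
      rw [← Finset.sum_sub_distrib, Finset.sum_div]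
    have hsum : Filter.Tendsto (slope V τ) (nhdsWithin τ (Set.Ioi τ)) (nhds (∑ i, c i)) := by
      have h := tendsto_finset_sum Finset.univ (fun i (_ : i ∈ Finset.univ) => hslopei i)
      exact h.congr (fun z => (hVslope z).symm)
    exact (hsum.eventually (gt_mem_nhds (lt_of_le_of_lt hcle hr))).frequently
  intro t ht
  have key := image_le_of_liminf_slope_right_le_deriv_boundary (B := fun _ => V 0)
    (B' := fun _ => 0) hVcont (le_refl (V 0)) continuousOn_const
    (fun τ _ => hasDerivWithinAt_const τ _ (V 0)) bound ht
  exact key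
end

section
/- The diverge network dynamics admit an equilibrium point in the free-flow region F = {x ∈ ℝ≥0^5 : x1a/2 + x1b < 2 − x2a − x2b and x1a/2 < 2 − x3a} if and only if λa + 2λb < 2. -/
/-- Non-FIFO scaling factor at cell 2 of the diverge network, taken equal to `1` when
the denominator vanishes. -/
noncomputable def m2 (x1a x1b x2a x2b : ℝ) : ℝ :=
  if x1a / 2 + x1b = 0 then 1 else min 1 ((2 - x2a - x2b) / (x1a / 2 + x1b))

/-- Non-FIFO scaling factor at cell 3 of the diverge network, taken equal to `1` when
the denominator vanishes. -/
noncomputable def m3 (x1a x3a : ℝ) : ℝ :=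
  if x1a / 2 = 0 then 1 else min 1 ((2 - x3a) / (x1a / 2))

/-- Flow of commodity `a` from cell 1 to cell 2. -/
noncomputable def f12a (x1a x1b x2a x2b : ℝ) : ℝ := x1a / 2 * m2 x1a x1b x2a x2b

/-- Flow of commodity `b` from cell 1 to cell 2. -/
noncomputable def f12b (x1a x1b x2a x2b : ℝ) : ℝ := x1b * m2 x1a x1b x2a x2b

/-- Flow of commodity `a` from cell 1 to cell 3. -/
noncomputable def f13a (x1a x3a : ℝ) : ℝ := x1a / 2 * m3 x1a x3a

/-- A state of the diverge network is an equilibrium point when the right-hand side of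
the dynamics vanishes. -/
noncomputable def IsEquilibrium (la lb x1a x1b x2a x2b x3a : ℝ) : Prop :=
  la - f12a x1a x1b x2a x2b - f13a x1a x3a = 0 ∧
  lb - f12b x1a x1b x2a x2b = 0 ∧
  f12a x1a x1b x2a x2b - x2a = 0 ∧
  f12b x1a x1b x2a x2b - x2b = 0 ∧
  f13a x1a x3a - x3a = 0

lemma m2_eq_one (x1a x1b x2a x2b : ℝ) (h1 : 0 ≤ x1a) (h2 : 0 ≤ x1b)
    (h : x1a / 2 + x1b < 2 - x2a - x2b) : m2 x1a x1b x2a x2b = 1 := by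
  unfold m2
  split
  · rfl
  · rename_i hne
    have hpos : 0 < x1a / 2 + x1b := lt_of_le_of_ne (by linarith) (Ne.symm hne)
    rw [min_eq_left]
    rw [le_div_iff₀ hpos]
    linarith

lemma m3_eq_one (x1a x3a : ℝ) (h1 : 0 ≤ x1a) (h : x1a / 2 < 2 - x3a) :
    m3 x1a x3a = 1 := by
  unfold m3
  split
  · rfl
  · rename_i hne
    have hpos : 0 < x1a / 2 := lt_of_le_of_ne (by linarith) (Ne.symm hne)
    rw [min_eq_left]
    rw [le_div_iff₀ hpos]
    linarith

/-- the diverge network dynamics admit an equilibrium point in the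
free-flow region if and only if `λa + 2 λb < 2`. -/
theorem diverge_freeflow_equilibrium_iff (la lb : ℝ) (hla : 0 ≤ la) (hlb : 0 ≤ lb) :
    (∃ x1a x1b x2a x2b x3a : ℝ,
      0 ≤ x1a ∧ 0 ≤ x1b ∧ 0 ≤ x2a ∧ 0 ≤ x2b ∧ 0 ≤ x3a ∧
      x1a / 2 + x1b < 2 - x2a - x2b ∧ x1a / 2 < 2 - x3a ∧
      IsEquilibrium la lb x1a x1b x2a x2b x3a) ↔ la + 2 * lb < 2 := by
  constructor
  · rintro ⟨x1a, x1b, x2a, x2b, x3a, h1, h2, h3, h4, h5, hf2, hf3, e1, e2, e3, e4, e5⟩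
    have hm2 := m2_eq_one x1a x1b x2a x2b h1 h2 hf2
    have hm3 := m3_eq_one x1a x3a h1 hf3
    simp only [f12a, f12b, f13a, hm2, hm3, mul_one] at e1 e2 e3 e4 e5
    linarith
  · intro h
    refine ⟨la, lb, la / 2, lb, la / 2, hla, hlb, by linarith, hlb, by linarith, by linarith,
      by linarith, ?_, ?_, ?_, ?_, ?_⟩ <;>
    simp only [f12a, f12b, f13a,
      m2_eq_one la lb (la / 2) lb hla hlb (by linarith),
      m3_eq_one la (la / 2) hla (by linarith), mul_one] <;> ring
end

section
/- If λa, λb ≥ 0 satisfy λa + 2λb > 2, λa + λb < 2 and λb < 1, then the point x* with x1a = 2(λa + λb − 1), x1b = λb(λa + λb − 1)/(1 − λb), x2a = 1 − λb, x2b = λb, x3a = λa + λb − 1 is an equilibrium point of the diverge network dynamics; at this point cell 2 is congested and cell 3 is in free flow, i.e., 2 − x2a − x2b < x1a/2 + x1b and x1a/2 ≤ 2 − x3a. -/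
/-- if `λa + 2 λb > 2`, `λa + λb < 2` and `λb < 1`, then the indicated
point is an equilibrium of the diverge network dynamics at which cell 2 is congested and
cell 3 is in free flow. -/
theorem diverge_congested_equilibrium (la lb : ℝ) (hla : 0 ≤ la) (hlb : 0 ≤ lb)
    (h1 : la + 2 * lb > 2) (h2 : la + lb < 2) (h3 : lb < 1) :
    IsEquilibrium la lb
      (2 * (la + lb - 1)) (lb * (la + lb - 1) / (1 - lb)) (1 - lb) lb (la + lb - 1) ∧
    2 - (1 - lb) - lb < 2 * (la + lb - 1) / 2 + lb * (la + lb - 1) / (1 - lb) ∧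
    2 * (la + lb - 1) / 2 ≤ 2 - (la + lb - 1) := by
  set s := la + lb - 1 with hsdef
  have hb : (0:ℝ) < 1 - lb := by linarith
  have hs1 : 1 - lb < s := by simp only [hsdef]; linarith
  have hs0 : 0 < s := by linarith
  have hs2 : s < 1 := by simp only [hsdef]; linarith
  have hden : 2 * s / 2 + lb * s / (1 - lb) = s / (1 - lb) := by
    field_simp; ring
  have hdpos : 0 < s / (1 - lb) := div_pos hs0 hb
  have hm2 : m2 (2 * s) (lb * s / (1 - lb)) (1 - lb) lb = (1 - lb) / s := by
    rw [m2, if_neg (by rw [hden]; exact ne_of_gt hdpos), hden]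
    have h1 : (2 - (1 - lb) - lb) / (s / (1 - lb)) = (1 - lb) / s := by
      rw [div_div_eq_mul_div]; ring_nf
    rw [h1, min_eq_right]
    rw [div_le_one hs0]; linarith
  have hm3 : m3 (2 * s) s = 1 := by
    rw [m3, if_neg (by positivity)]
    rw [min_eq_left]
    rw [le_div_iff₀ (by linarith : (0:ℝ) < 2 * s / 2)]; linarith
  constructor
  · refine ⟨?_, ?_, ?_, ?_, ?_⟩ <;>
      simp only [f12a, f12b, f13a, hm2, hm3] <;> field_simp <;> ring
  constructor
  · rw [hden]
    have : (1:ℝ) < s / (1 - lb) := by rw [lt_div_iff₀ hb]; linarith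
    linarith
  · linarith
end

section
/- For all λa, λb ≥ 0, the diverge network dynamics admit no equilibrium point at which cell 3 is congested while cell 2 is in free flow; that is, there is no equilibrium x ∈ ℝ≥0^5 satisfying both 2 − x3a < x1a/2 and x1a/2 + x1b ≤ 2 − x2a − x2b. -/
/-- for all nonnegative exogenous inflows, the diverge network dynamics
admit no equilibrium point at which cell 3 is congested while cell 2 is in free flow. -/
theorem diverge_no_equilibrium_cell3_congested :
    ∀ la lb : ℝ, 0 ≤ la → 0 ≤ lb →
      ¬ ∃ x1a x1b x2a x2b x3a : ℝ,
        0 ≤ x1a ∧ 0 ≤ x1b ∧ 0 ≤ x2a ∧ 0 ≤ x2b ∧ 0 ≤ x3a ∧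
        IsEquilibrium la lb x1a x1b x2a x2b x3a ∧
        2 - x3a < x1a / 2 ∧ x1a / 2 + x1b ≤ 2 - x2a - x2b := by
  rintro la lb _ _ ⟨x1a, x1b, x2a, x2b, x3a, h1a, h1b, h2a, h2b, h3a,
    ⟨_, _, e2a, e2b, e3a⟩, hcong, hfree⟩
  -- First: x1a > 0
  have hx1pos : 0 < x1a := by
    by_contra h
    push_neg at h
    have hx1 : x1a = 0 := le_antisymm h h1a
    -- then f13a = 0 so x3a = 0, but congestion gives 2 < 0
    have : x3a = 0 := by
      have : f13a x1a x3a = 0 := by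
        simp [f13a, hx1]
      linarith [e3a]
    rw [hx1, this] at hcong
    norm_num at hcong
  have hden3 : x1a / 2 ≠ 0 := by positivity
  -- m3 value
  have hm3 : m3 x1a x3a = (2 - x3a) / (x1a / 2) := by
    rw [m3, if_neg hden3]
    apply min_eq_right
    rw [div_le_one (by positivity)]
    linarith
  have hx3 : x3a = 1 := by
    have : f13a x1a x3a = 2 - x3a := by
      rw [f13a, hm3]
      field_simp
    rw [this] at e3a
    linarith
  have hx1gt : 2 < x1a := by
    rw [hx3] at hcong; linarith
  -- cell 2: denominator positive, ratio ≥ 1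
  have hden2 : (0:ℝ) < x1a / 2 + x1b := by positivity
  have hm2 : m2 x1a x1b x2a x2b = 1 := by
    rw [m2, if_neg (ne_of_gt hden2)]
    apply min_eq_left
    rw [le_div_iff₀ hden2]
    linarith
  have h2a' : x2a = x1a / 2 := by
    rw [f12a, hm2] at e2a; linarith
  have h2b' : x2b = x1b := by
    rw [f12b, hm2] at e2b; linarith
  rw [h2a', h2b'] at hfree
  linarith
end

section
/- Suppose λa + λb = 2 with λa > 1 and λb > 0. Then for every c ≥ max(λb, λb/(λa − 1)), the point x*(c) with x1a = 2c(λa − 1)/λb, x1b = c, x2a = λa − 1, x2b = λb, x3a = 1 is an equilibrium point of the diverge network dynamics; in particular, the dynamics admit a continuum of distinct equilibrium points. -/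
lemma m2_eq_div_of_supply_le {x1a x1b x2a x2b : ℝ} (hD : 0 < x1a / 2 + x1b)
    (hS : 2 - x2a - x2b ≤ x1a / 2 + x1b) :
    m2 x1a x1b x2a x2b = (2 - x2a - x2b) / (x1a / 2 + x1b) := by
  rw [m2, if_neg hD.ne', min_eq_right ((div_le_one hD).2 hS)]

lemma m3_eq_div_of_supply_le {x1a x3a : ℝ} (hD : 0 < x1a / 2) (hS : 2 - x3a ≤ x1a / 2) :
    m3 x1a x3a = (2 - x3a) / (x1a / 2) := by
  rw [m3, if_neg hD.ne', min_eq_right ((div_le_one hD).2 hS)]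

theorem isEquilibrium_of_congested {la lb c : ℝ} (hsum : la + lb = 2) (hla : 1 < la)
    (hlb : 0 < lb) (hc₂ : lb ≤ c) (hc₃ : lb / (la - 1) ≤ c) :
    IsEquilibrium la lb (2 * c * (la - 1) / lb) c (la - 1) lb 1 := by
  have hla₁ : 0 < la - 1 := by linarith
  have hc : 0 < c := hlb.trans_le hc₂
  have half_eq : 2 * c * (la - 1) / lb / 2 = c * (la - 1) / lb := by ring
  have demand₂_eq : 2 * c * (la - 1) / lb / 2 + c = c / lb := by
    field_simp
    linear_combination hsum
  have supply₂_eq : 2 - (la - 1) - lb = 1 := by linarith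
  have hm2 : m2 (2 * c * (la - 1) / lb) c (la - 1) lb = lb / c := by
    rw [m2_eq_div_of_supply_le (by rw [demand₂_eq]; positivity)
      (by rw [demand₂_eq, supply₂_eq, one_le_div hlb]; exact hc₂), demand₂_eq, supply₂_eq,
      one_div_div]
  have hm3 : m3 (2 * c * (la - 1) / lb) 1 = lb / (c * (la - 1)) := by
    rw [m3_eq_div_of_supply_le (by rw [half_eq]; positivity)
      (by rw [half_eq, le_div_iff₀ hlb]; linarith [(div_le_iff₀ hla₁).1 hc₃]), half_eq,
      show (2 : ℝ) - 1 = 1 by norm_num, one_div_div]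
  have hf12a : f12a (2 * c * (la - 1) / lb) c (la - 1) lb = la - 1 := by
    rw [f12a, hm2, half_eq]
    field_simp
  have hf12b : f12b (2 * c * (la - 1) / lb) c (la - 1) lb = lb := by
    rw [f12b, hm2]
    field_simp
  have hf13a : f13a (2 * c * (la - 1) / lb) 1 = 1 := by
    rw [f13a, hm3, half_eq]
    field_simp
  refine ⟨?_, ?_, ?_, ?_, ?_⟩ <;> linarith

/-- if `λa + λb = 2` with `λa > 1` and `λb > 0`, then for every
`c ≥ max (λb, λb / (λa − 1))` the point
`(2c(λa−1)/λb, c, λa−1, λb, 1)` is an equilibrium point of the diverge network dynamics;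
in particular there is a continuum (an infinite set) of distinct equilibrium points. -/
theorem diverge_continuum_of_equilibria (la lb : ℝ)
    (hsum : la + lb = 2) (hla : 1 < la) (hlb : 0 < lb) :
    (∀ c : ℝ, max lb (lb / (la - 1)) ≤ c →
      IsEquilibrium la lb (2 * c * (la - 1) / lb) c (la - 1) lb 1) ∧
    {p : ℝ × ℝ × ℝ × ℝ × ℝ |
      IsEquilibrium la lb p.1 p.2.1 p.2.2.1 p.2.2.2.1 p.2.2.2.2}.Infinite := by
  have equilibria : ∀ c : ℝ, max lb (lb / (la - 1)) ≤ c →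
      IsEquilibrium la lb (2 * c * (la - 1) / lb) c (la - 1) lb 1 := fun c hc =>
    isEquilibrium_of_congested hsum hla hlb (le_of_max_le_left hc) (le_of_max_le_right hc)
  let state : ℝ → ℝ × ℝ × ℝ × ℝ × ℝ := fun c => (2 * c * (la - 1) / lb, c, la - 1, lb, 1)
  have state_injective : Function.Injective state := fun c c' h => congrArg (·.2.1) h
  refine ⟨equilibria,
    ((Set.Ici_infinite (max lb (lb / (la - 1)))).image state_injective.injOn).mono ?_⟩
  rintro _ ⟨c, hc, rfl⟩
  exact equilibria c hc
end
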